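/- arXiv:1111.3795 — 8 statements merged into one kernel-verified Lean document; each statement's English description precedes it below -/
import Mathlib

section
/- Let (f_n)_{n≥1} be a sequence of μ₀-integrable functions that is uniformly integrable with respect to μ₀, and let f₀ ∈ L¹(μ₀) be such that ∫_E F·f_n dμ₀ → ∫_E F·f₀ dμ₀ as n → ∞ for every F ∈ C_b(E). Then ∫_E F·f_n dμ₀ → ∫_E F·f₀ dμ₀ as n → ∞ for every bounded Borel measurable F : E → ℝ. -/
/-!
Approximate the bounded measurable `F` in `L¹(μ₀)` by a bounded continuous `G`, clamped to the
bound `M` of `F`. Splitting `E` according to whether `|h| ≤ R` gives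
`|∫ (F - G) h| ≤ R ‖F - G‖₁ + 2M ∫_{|h| > R} |h|`, which is small uniformly for
`h ∈ {f₀, f₁, f₂, …}` once `R` is chosen by uniform integrability. So `∫ F fₙ` stays uniformly
close to `∫ G fₙ`, which converges to `∫ G f₀`, itself close to `∫ F f₀`.
-/

open MeasureTheory Filter Set Topology

theorem tendsto_of_forall_dist_le {ι α : Type*} [PseudoMetricSpace α] {l : Filter ι}
    {u : ι → α} {a : α}
    (h : ∀ ε > 0, ∃ v : ι → α, ∃ b, Tendsto v l (𝓝 b) ∧ (∀ i, dist (u i) (v i) ≤ ε) ∧ dist b a ≤ ε) :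
    Tendsto u l (𝓝 a) := by
  refine Metric.tendsto_nhds.2 fun ε hε => ?_
  obtain ⟨v, b, hv, huv, hba⟩ := h (ε / 3) (by positivity)
  filter_upwards [Metric.tendsto_nhds.1 hv (ε / 3) (by positivity)] with i hi
  linarith [dist_triangle4 (u i) (v i) b a, huv i]

theorem mul_div_add_one_le {a c : ℝ} (ha : 0 ≤ a) (hc : 0 ≤ c) : a * (c / (a + 1)) ≤ c := by
  rw [mul_div_assoc', div_le_iff₀ (by positivity)]
  nlinarith

theorem abs_max_min_sub_le {α : Type*} [AddCommGroup α] [LinearOrder α] [IsOrderedAddMonoid α]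
    {a b M : α} (hb : |b| ≤ M) : |max (min a M) (-M) - b| ≤ |a - b| :=
  calc |max (min a M) (-M) - b| = |max (min a M) (-M) - max (min b M) (-M)| := by
        rw [min_eq_left (abs_le.1 hb).2, max_eq_left (abs_le.1 hb).1]
    _ ≤ |min a M - min b M| := abs_max_sub_max_le_abs _ _ _
    _ ≤ |a - b| := by simpa using abs_min_sub_min_le_max a M b M

section Tail

variable {E : Type*} [MeasurableSpace E] {μ : Measure E} {h : E → ℝ}

theorem MeasureTheory.Integrable.tendsto_setIntegral_abs_gt_atTop_zero (hh : Integrable h μ) :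
    Tendsto (fun R : ℝ => ∫ x in {x | R < |h x|}, |h x| ∂μ) atTop (𝓝 0) := by
  have hs : ∀ R : ℝ, NullMeasurableSet {x | R < |h x|} μ := fun R =>
    nullMeasurableSet_lt aemeasurable_const hh.1.aemeasurable.abs
  simp_rw [← integral_indicator₀ (hs _)]
  rw [← integral_zero E ℝ]
  refine tendsto_integral_filter_of_dominated_convergence (fun x => |h x|)
    (.of_forall fun R => (hh.abs.indicator₀ (hs R)).1) (.of_forall fun R => .of_forall fun x => ?_)
    hh.abs (.of_forall fun x => ?_)
  · rw [Real.norm_eq_abs, abs_of_nonneg (indicator_nonneg (fun _ _ => abs_nonneg _) x)]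
    exact indicator_le_self' (fun _ _ => abs_nonneg _) x
  · refine tendsto_const_nhds.congr' ((eventually_ge_atTop |h x|).mono fun R hR => ?_)
    exact (indicator_of_notMem (s := {x | R < |h x|}) (not_lt.2 hR) _).symm

theorem setIntegral_abs_gt_antitone (hh : Integrable h μ) :
    Antitone fun R : ℝ => ∫ x in {x | R < |h x|}, |h x| ∂μ := fun _ _ hRR' =>
  setIntegral_mono_set hh.abs.integrableOn (.of_forall fun _ => abs_nonneg _)
    (Eventually.of_forall fun _ hx => hRR'.trans_lt hx)

theorem abs_integral_mul_le {φ : E → ℝ} (hφ : Integrable φ μ) (hh : Integrable h μ) {C R : ℝ}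
    (hR : 0 ≤ R) (hφC : ∀ x, |φ x| ≤ C) :
    |∫ x, φ x * h x ∂μ| ≤ R * ∫ x, |φ x| ∂μ + C * ∫ x in {x | R < |h x|}, |h x| ∂μ := by
  set s := {x | R < |h x|}
  have hs : NullMeasurableSet s μ := nullMeasurableSet_lt aemeasurable_const hh.1.aemeasurable.abs
  have hsh : Integrable (s.indicator fun x => |h x|) μ := hh.abs.indicator₀ hs
  have hpointwise : ∀ x, |φ x * h x| ≤ R * |φ x| + C * s.indicator (fun x => |h x|) x := by
    intro x
    rw [abs_mul]
    by_cases hx : x ∈ s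
    · rw [indicator_of_mem hx]
      nlinarith [abs_nonneg (φ x), abs_nonneg (h x), hφC x]
    · rw [indicator_of_notMem hx, mul_zero, add_zero, mul_comm]
      exact mul_le_mul_of_nonneg_right (not_lt.1 hx) (abs_nonneg _)
  calc |∫ x, φ x * h x ∂μ| ≤ ∫ x, |φ x * h x| ∂μ := abs_integral_le_integral_abs
    _ ≤ ∫ x, (R * |φ x| + C * s.indicator (fun x => |h x|) x) ∂μ :=
        integral_mono_of_nonneg (.of_forall fun _ => abs_nonneg _)
          ((hφ.abs.const_mul R).add (hsh.const_mul C)) (.of_forall hpointwise)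
    _ = R * ∫ x, |φ x| ∂μ + C * ∫ x in s, |h x| ∂μ := by
        rw [integral_add (hφ.abs.const_mul R) (hsh.const_mul C), integral_const_mul,
          integral_const_mul, integral_indicator₀ hs]

theorem abs_integral_mul_sub_integral_mul_le {F G : E → ℝ} (hF : Integrable F μ)
    (hG : Integrable G μ) (hh : Integrable h μ) {M R : ℝ} (hR : 0 ≤ R) (hFM : ∀ x, |F x| ≤ M)
    (hGM : ∀ x, |G x| ≤ M) :
    |∫ x, F x * h x ∂μ - ∫ x, G x * h x ∂μ|
      ≤ R * ∫ x, |F x - G x| ∂μ + 2 * M * ∫ x in {x | R < |h x|}, |h x| ∂μ := by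
  have hmul : ∀ {φ : E → ℝ}, Integrable φ μ → (∀ x, |φ x| ≤ M) → Integrable (fun x => φ x * h x) μ :=
    fun hφ hφM => hh.bdd_mul hφ.1 (c := M) (.of_forall hφM)
  rw [← integral_sub (hmul hF hFM) (hmul hG hGM)]
  simp_rw [← sub_mul]
  refine abs_integral_mul_le (hF.sub hG) hh hR fun x => ?_
  simp only [Pi.sub_apply]
  linarith [abs_sub (F x) (G x), hFM x, hGM x]

theorem exists_nonneg_setIntegral_abs_gt_lt {ι : Type*} {f : ι → E → ℝ} {f₀ : E → ℝ}
    {R₁ η : ℝ} (hf : ∀ i, Integrable (f i) μ) (hf₀ : Integrable f₀ μ) (hη : 0 < η)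
    (hR₁ : ∀ i, ∫ x in {x | R₁ < |f i x|}, |f i x| ∂μ < η) :
    ∃ R, 0 ≤ R ∧ ∫ x in {x | R < |f₀ x|}, |f₀ x| ∂μ < η ∧
      ∀ i, ∫ x in {x | R < |f i x|}, |f i x| ∂μ < η :=
  ((eventually_ge_atTop 0).and
    ((hf₀.tendsto_setIntegral_abs_gt_atTop_zero.eventually (eventually_lt_nhds hη)).and
      ((eventually_ge_atTop R₁).mono fun _ hR i =>
        (setIntegral_abs_gt_antitone (hf i) hR).trans_lt (hR₁ i)))).exists

end Tail

theorem exists_continuous_abs_le_integral_abs_sub_le {E : Type*} [TopologicalSpace E]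
    [MeasurableSpace E] [OpensMeasurableSpace E] {μ : Measure E} {F G : E → ℝ}
    (hF : Integrable F μ) (hG : Integrable G μ) (hGc : Continuous G) {M : ℝ}
    (hFM : ∀ x, |F x| ≤ M) :
    ∃ G' : E → ℝ, Continuous G' ∧ (∀ x, |G' x| ≤ M) ∧
      ∫ x, |G' x - F x| ∂μ ≤ ∫ x, |G x - F x| ∂μ := by
  refine ⟨fun x => max (min (G x) M) (-M), by fun_prop, fun x => ?_, ?_⟩
  · exact abs_le.2 ⟨le_max_right _ _,
      max_le (min_le_right _ _) (by linarith [abs_nonneg (F x), hFM x])⟩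
  · exact integral_mono_of_nonneg (.of_forall fun _ => abs_nonneg _) (hG.sub hF).abs
      (.of_forall fun x => abs_max_min_sub_le (hFM x))

/-- If `(f n)` is uniformly integrable w.r.t. the finite Borel measure `μ₀`, the bounded
continuous functions are dense in `L¹(μ₀)`, and `∫ F * f n → ∫ F * f₀` for all bounded
continuous `F`, then the same convergence holds for all bounded Borel measurable `F`. -/
theorem stmt0 {E : Type*} [TopologicalSpace E] [MeasurableSpace E] [BorelSpace E]
    (μ₀ : Measure E) [IsFiniteMeasure μ₀]
    (f : ℕ → E → ℝ) (f₀ : E → ℝ)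
    (hf : ∀ n, Integrable (f n) μ₀) (hf₀ : Integrable f₀ μ₀)
    (hdense : ∀ g : E → ℝ, Integrable g μ₀ → ∀ δ : ℝ, 0 < δ →
      ∃ F : E → ℝ, Continuous F ∧ (∃ M : ℝ, ∀ x, |F x| ≤ M) ∧
        ∫ x, |F x - g x| ∂μ₀ < δ)
    (hui : ∀ ε : ℝ, 0 < ε → ∃ R : ℝ, ∀ n,
      ∫ x in {x | R < |f n x|}, |f n x| ∂μ₀ < ε)
    (hconv : ∀ F : E → ℝ, Continuous F → (∃ M : ℝ, ∀ x, |F x| ≤ M) →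
      Tendsto (fun n => ∫ x, F x * f n x ∂μ₀) atTop (nhds (∫ x, F x * f₀ x ∂μ₀))) :
    ∀ F : E → ℝ, Measurable F → (∃ M : ℝ, ∀ x, |F x| ≤ M) →
      Tendsto (fun n => ∫ x, F x * f n x ∂μ₀) atTop (nhds (∫ x, F x * f₀ x ∂μ₀)) := by
  rintro F hFm ⟨M, hFM⟩
  -- `M` itself may be negative when `E` is empty
  replace hFM : ∀ x, |F x| ≤ |M| := fun x => (hFM x).trans (le_abs_self M)
  have hF : Integrable F μ₀ := .of_bound hFm.aestronglyMeasurable _ (.of_forall hFM)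
  refine tendsto_of_forall_dist_le fun ε hε => ?_
  set η := ε / 2 / (2 * |M| + 1)
  have hη : 0 < η := by positivity
  obtain ⟨R₁, hR₁⟩ := hui η hη
  obtain ⟨R, hR, hRf₀, hRf⟩ := exists_nonneg_setIntegral_abs_gt_lt hf hf₀ hη hR₁
  obtain ⟨G, hGc, ⟨MG, hGM⟩, hGF⟩ := hdense F hF (ε / 2 / (R + 1)) (by positivity)
  obtain ⟨G', hG'c, hG'M, hG'F⟩ := exists_continuous_abs_le_integral_abs_sub_le hF
    (.of_bound hGc.aestronglyMeasurable MG (.of_forall hGM)) hGc hFM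
  have hG' : Integrable G' μ₀ := .of_bound hG'c.aestronglyMeasurable _ (.of_forall hG'M)
  have hclose : ∀ h : E → ℝ, Integrable h μ₀ → ∫ x in {x | R < |h x|}, |h x| ∂μ₀ < η →
      dist (∫ x, F x * h x ∂μ₀) (∫ x, G' x * h x ∂μ₀) ≤ ε := fun h hh hhR =>
    calc _ ≤ R * ∫ x, |F x - G' x| ∂μ₀ + 2 * |M| * ∫ x in {x | R < |h x|}, |h x| ∂μ₀ :=
          abs_integral_mul_sub_integral_mul_le hF hG' hh hR hFM hG'M
      _ ≤ R * (ε / 2 / (R + 1)) + 2 * |M| * η := by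
          gcongr
          · simp_rw [abs_sub_comm (F _)]
            exact hG'F.trans hGF.le
      _ ≤ ε := by
          linarith [mul_div_add_one_le hR (half_pos hε).le,
            mul_div_add_one_le (by positivity : 0 ≤ 2 * |M|) (half_pos hε).le]
  exact ⟨_, _, hconv G' hG'c ⟨_, hG'M⟩, fun n => hclose _ (hf n) (hRf n),
    by rw [dist_comm]; exact hclose f₀ hf₀ hRf₀⟩
end

section
/- Let (E, 𝔪) be a measure space and Φ₀ : E → [0,∞) an 𝔪-integrable function. For each ε ∈ (0,1) let T_ε : E → E be measurable and Φ_ε : E → [0,∞) be measurable, and assume that the pushforward under T_ε of the measure Φ₀·𝔪 (the measure with density Φ₀ with respect to 𝔪) equals the measure Φ_ε·𝔪. Suppose there exists a measurable function η : E → [0,∞] with Φ_ε(T_ε(x)) ≤ η(x) for every ε ∈ (0,1) and every x ∈ E, and with η < ∞ (Φ₀·𝔪)-almost everywhere. Then the family (Φ_ε)_{ε∈(0,1)} is uniformly integrable with respect to 𝔪: sup_{ε∈(0,1)} ∫_{{Φ_ε > R}} Φ_ε d𝔪 → 0 as R → ∞. -/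
/-!
Pushing `Φ₀ • 𝔪` forward along `T ε` turns the tail integral `∫_{Φ ε > R} Φ ε d𝔪` into the
`(Φ₀ • 𝔪)`-measure of `{x | Φ ε (T ε x) > R}`, which lies inside `{x | η x > R}`, uniformly in `ε`.
Since `Φ₀ • 𝔪` is finite and `η < ∞` almost everywhere, continuity from above makes the measure
of `{η > R}` tend to `0` as `R → ∞`.
-/

open MeasureTheory Filter Topology
open scoped NNReal ENNReal

section

variable {α β : Type*} [MeasurableSpace α] [MeasurableSpace β]

lemma tendsto_measure_setOf_lt_atTop_of_ae_lt_top {μ : Measure α} [IsFiniteMeasure μ]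
    {f : α → ℝ≥0∞} (hf : AEMeasurable f μ) (hfin : ∀ᵐ x ∂μ, f x < ∞) :
    Tendsto (fun R : ℝ≥0 => μ {x | (R : ℝ≥0∞) < f x}) atTop (𝓝 0) := by
  have hanti : Antitone fun R : ℝ≥0 => {x | (R : ℝ≥0∞) < f x} :=
    fun _ _ hRS _ hx => lt_of_le_of_lt (ENNReal.coe_le_coe.mpr hRS) hx
  have hinter : ⋂ R : ℝ≥0, {x | (R : ℝ≥0∞) < f x} = {x | f x = ∞} := by
    ext x
    simp only [Set.mem_iInter, Set.mem_ofPred_eq]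
    refine ⟨fun h => ?_, fun h R => h ▸ ENNReal.coe_lt_top⟩
    by_contra hne
    exact (h (f x).toNNReal).ne (ENNReal.coe_toNNReal hne)
  have hnull : μ {x | f x = ∞} = 0 := by
    simpa only [ae_iff, not_lt, top_le_iff] using hfin
  simpa only [hinter, hnull, Function.comp_def] using tendsto_measure_iInter_atTop
    (fun R => nullMeasurableSet_lt aemeasurable_const hf) hanti ⟨0, measure_ne_top μ _⟩

lemma setLIntegral_lt_le_measure_of_map_eq_withDensity {m : Measure β} {ν : Measure α}
    {T : α → β} {φ : β → ℝ≥0} {η : α → ℝ≥0∞} (hT : Measurable T) (hφ : Measurable φ)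
    (hpush : ν.map T = m.withDensity fun y => (φ y : ℝ≥0∞))
    (hdom : ∀ᵐ x ∂ν, (φ (T x) : ℝ≥0∞) ≤ η x) (R : ℝ≥0) :
    ∫⁻ y in {y | R < φ y}, (φ y : ℝ≥0∞) ∂m ≤ ν {x | (R : ℝ≥0∞) < η x} := by
  have hmeas : MeasurableSet {y | R < φ y} := measurableSet_lt measurable_const hφ
  calc ∫⁻ y in {y | R < φ y}, (φ y : ℝ≥0∞) ∂m
      = ν (T ⁻¹' {y | R < φ y}) := by
        rw [← withDensity_apply _ hmeas, ← hpush, Measure.map_apply hT hmeas]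
    _ ≤ ν {x | (R : ℝ≥0∞) < η x} :=
        measure_mono_ae <| hdom.mono fun _ hx hxR => (ENNReal.coe_lt_coe.mpr hxR).trans_le hx

end

theorem stmt1_general {E : Type*} [MeasurableSpace E] (m : Measure E)
    (Φ₀ : E → ℝ≥0)
    (hΦ₀int : ∫⁻ x, (Φ₀ x : ℝ≥0∞) ∂m < ⊤)
    (T : ℝ → E → E) (Φ : ℝ → E → ℝ≥0)
    (hT : ∀ ε ∈ Set.Ioo (0 : ℝ) 1, Measurable (T ε))
    (hΦ : ∀ ε ∈ Set.Ioo (0 : ℝ) 1, Measurable (Φ ε))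
    (hpush : ∀ ε ∈ Set.Ioo (0 : ℝ) 1,
      Measure.map (T ε) (m.withDensity fun x => (Φ₀ x : ℝ≥0∞))
        = m.withDensity fun x => (Φ ε x : ℝ≥0∞))
    (η : E → ℝ≥0∞) (hη : Measurable η)
    (hdom : ∀ ε ∈ Set.Ioo (0 : ℝ) 1, ∀ x : E, (Φ ε (T ε x) : ℝ≥0∞) ≤ η x)
    (hfin : ∀ᵐ x ∂(m.withDensity fun x => (Φ₀ x : ℝ≥0∞)), η x < ⊤) :
    ∀ δ : ℝ≥0∞, 0 < δ → ∃ R : ℝ≥0, ∀ ε ∈ Set.Ioo (0 : ℝ) 1,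
      ∫⁻ x in {x | R < Φ ε x}, (Φ ε x : ℝ≥0∞) ∂m < δ := by
  intro δ hδ
  have := isFiniteMeasure_withDensity hΦ₀int.ne
  obtain ⟨R, hR⟩ := ((tendsto_measure_setOf_lt_atTop_of_ae_lt_top hη.aemeasurable hfin
    ).eventually_lt_const hδ).exists
  exact ⟨R, fun ε hε => (setLIntegral_lt_le_measure_of_map_eq_withDensity (hT ε hε) (hΦ ε hε)
    (hpush ε hε) (ae_of_all _ (hdom ε hε)) R).trans_lt hR⟩

/-- If for each `ε ∈ (0,1)` the pushforward of `Φ₀ • 𝔪` under `T ε` is `Φ ε • 𝔪`, and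
`Φ ε ∘ T ε` is dominated by a function `η` which is finite `(Φ₀ • 𝔪)`-a.e., then the family
`(Φ ε)` is uniformly integrable w.r.t. `𝔪`. -/
theorem stmt1 {E : Type*} [MeasurableSpace E] (m : Measure E)
    (Φ₀ : E → ℝ≥0) (hΦ₀ : Measurable Φ₀)
    (hΦ₀int : ∫⁻ x, (Φ₀ x : ℝ≥0∞) ∂m < ⊤)
    (T : ℝ → E → E) (Φ : ℝ → E → ℝ≥0)
    (hT : ∀ ε ∈ Set.Ioo (0 : ℝ) 1, Measurable (T ε))
    (hΦ : ∀ ε ∈ Set.Ioo (0 : ℝ) 1, Measurable (Φ ε))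
    (hpush : ∀ ε ∈ Set.Ioo (0 : ℝ) 1,
      Measure.map (T ε) (m.withDensity fun x => (Φ₀ x : ℝ≥0∞))
        = m.withDensity fun x => (Φ ε x : ℝ≥0∞))
    (η : E → ℝ≥0∞) (hη : Measurable η)
    (hdom : ∀ ε ∈ Set.Ioo (0 : ℝ) 1, ∀ x : E, (Φ ε (T ε x) : ℝ≥0∞) ≤ η x)
    (hfin : ∀ᵐ x ∂(m.withDensity fun x => (Φ₀ x : ℝ≥0∞)), η x < ⊤) :
    ∀ δ : ℝ≥0∞, 0 < δ → ∃ R : ℝ≥0, ∀ ε ∈ Set.Ioo (0 : ℝ) 1,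
      ∫⁻ x in {x | R < Φ ε x}, (Φ ε x : ℝ≥0∞) ∂m < δ :=
  stmt1_general m Φ₀ hΦ₀int T Φ hT hΦ hpush η hη hdom hfin
end

section
/- For every measurable g : S → ℝ and every measurable f : S × ℝ → [0,∞], one has E[ Σ_{0 ≤ i < N} f(ξ_i, Σ_{0 ≤ j < N, j ≠ i} g(ξ_j)) ] = λ · E[ f(ξ_N, Σ_{0 ≤ j < N} g(ξ_j)) ], as an identity in [0,∞]. -/
/-!
Condition on `N`. The marks are i.i.d. with law `π` and independent of `N`, so given `N = n + 1`
the `n + 1` summands on the left all have, by exchangeability of `π ^ (n + 1)`, the same mean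
`J n := ∫ f (x n, ∑_{j < n} g (x j)) dπ ^ (n + 1)`, which is also the mean of the right-hand
integrand given `N = n`. Hence the left side is `∑ₙ (n + 1) P(N = n + 1) J n`, the right side is
`λ ∑ₙ P(N = n) J n`, and they agree by the Poisson recursion `(n + 1) P(N = n + 1) = λ P(N = n)`.
-/

open MeasureTheory ProbabilityTheory
open scoped ENNReal

universe u v

/-- The codomain family for the joint family `(N, ξ₀, ξ₁, …)`: the index `none` corresponds
to the `ℕ`-valued variable `N` and `some i` to the `S`-valued mark `ξ i`. -/
def stmt3Fam (S : Type u) : Option ℕ → Type u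
  | none => ULift ℕ
  | some _ => S

/-- The measurable structure on each member of the family. -/
def stmt3FamMS (S : Type u) [MeasurableSpace S] :
    ∀ o : Option ℕ, MeasurableSpace (stmt3Fam S o)
  | none => inferInstanceAs (MeasurableSpace (ULift ℕ))
  | some _ => inferInstanceAs (MeasurableSpace S)

/-- The joint family `(N, ξ₀, ξ₁, …)` as a dependent family of random variables. -/
def stmt3FamFun {Ω : Type v} {S : Type u} (N : Ω → ℕ) (ξ : ℕ → Ω → S) :
    ∀ o : Option ℕ, Ω → stmt3Fam S o
  | none => fun ω => ULift.up (N ω)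
  | some i => ξ i

open Finset

section Exchangeable

variable {S ι : Type*} [MeasurableSpace S] [Fintype ι] (μ : Measure S) [SigmaFinite μ]

lemma lintegral_pi_comp_perm (e : Equiv.Perm ι) (H : (ι → S) → ℝ≥0∞) :
    ∫⁻ x, H (x ∘ e) ∂Measure.pi (fun _ ↦ μ) = ∫⁻ x, H x ∂Measure.pi (fun _ ↦ μ) := by
  have hcomp : ⇑(MeasurableEquiv.piCongrLeft (fun _ ↦ S) e.symm) = (· ∘ e) := by
    ext x i
    simp [MeasurableEquiv.coe_piCongrLeft, Equiv.piCongrLeft_apply_eq_cast]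
  have := (measurePreserving_piCongrLeft (fun _ : ι ↦ μ) e.symm).lintegral_comp_emb
    (MeasurableEquiv.measurableEmbedding _) H
  rwa [hcomp] at this

lemma lintegral_pi_eq_of_equivariant {Φ : (ι → S) → ι → ℝ≥0∞}
    (hΦ : ∀ x (e : Equiv.Perm ι) i, Φ (x ∘ e) i = Φ x (e i)) (i j : ι) :
    ∫⁻ x, Φ x i ∂Measure.pi (fun _ ↦ μ) = ∫⁻ x, Φ x j ∂Measure.pi (fun _ ↦ μ) := by
  classical
  rw [← lintegral_pi_comp_perm μ (Equiv.swap i j) (Φ · j)]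
  simp [hΦ]

lemma lintegral_sum_pi_eq_card_mul {Φ : (ι → S) → ι → ℝ≥0∞} (hΦm : ∀ i, Measurable (Φ · i))
    (hΦ : ∀ x (e : Equiv.Perm ι) i, Φ (x ∘ e) i = Φ x (e i)) (j : ι) :
    ∫⁻ x, ∑ i, Φ x i ∂Measure.pi (fun _ ↦ μ)
      = Fintype.card ι * ∫⁻ x, Φ x j ∂Measure.pi (fun _ ↦ μ) := by
  rw [lintegral_finsetSum _ fun i _ ↦ hΦm i]
  simp [lintegral_pi_eq_of_equivariant μ hΦ _ j]

end Exchangeable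

section SumExcept

variable {S ι : Type*} [Fintype ι] [DecidableEq ι]

def sumExcept (g : S → ℝ) (x : ι → S) (i : ι) : ℝ := ∑ j ∈ univ.erase i, g (x j)

lemma sumExcept_comp_perm (g : S → ℝ) (x : ι → S) (e : Equiv.Perm ι) (i : ι) :
    sumExcept g (x ∘ e) i = sumExcept g x (e i) :=
  Finset.sum_equiv e (by simp) (by simp)

lemma measurable_sumExcept [MeasurableSpace S] {g : S → ℝ} (hg : Measurable g) (i : ι) :
    Measurable (sumExcept g · i) :=
  Finset.measurable_sum _ fun j _ ↦ hg.comp (measurable_pi_apply j)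

lemma sum_range_erase_eq_sumExcept (g : S → ℝ) (y : ℕ → S) {n : ℕ} (i : Fin n) :
    ∑ j ∈ (range n).erase i, g (y j) = sumExcept g (fun j : Fin n ↦ y j) i := by
  rw [sumExcept, sum_erase_eq_sub (mem_range.2 i.isLt), sum_erase_eq_sub (mem_univ i),
    Fin.sum_univ_eq_sum_range (fun j ↦ g (y j))]

lemma sum_range_erase_eq_sum_sumExcept {β : Type*} [AddCommMonoid β] (f : S × ℝ → β)
    (g : S → ℝ) (y : ℕ → S) (n : ℕ) :
    ∑ i ∈ range n, f (y i, ∑ j ∈ (range n).erase i, g (y j))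
      = ∑ i : Fin n, f (y i, sumExcept g (fun j : Fin n ↦ y j) i) := by
  rw [← Fin.sum_univ_eq_sum_range (fun i ↦ f (y i, ∑ j ∈ (range n).erase i, g (y j)))]
  simp only [sum_range_erase_eq_sumExcept]

lemma sum_range_eq_sumExcept_last (g : S → ℝ) (y : ℕ → S) (n : ℕ) :
    ∑ j ∈ range n, g (y j) = sumExcept g (fun j : Fin (n + 1) ↦ y j) (Fin.last n) := by
  rw [sumExcept, sum_erase_eq_sub (mem_univ _), Fin.sum_univ_eq_sum_range (fun j ↦ g (y j)),
    sum_range_succ, Fin.val_last, add_sub_cancel_right]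

end SumExcept

lemma natCast_succ_mul_ofReal_poisson {l : ℝ} (hl : 0 ≤ l) (m : ℕ) :
    ((m + 1 : ℕ) : ℝ≥0∞) * ENNReal.ofReal (Real.exp (-l) * l ^ (m + 1) / (m + 1).factorial)
      = ENNReal.ofReal l * ENNReal.ofReal (Real.exp (-l) * l ^ m / m.factorial) := by
  rw [← ENNReal.ofReal_natCast, ← ENNReal.ofReal_mul (by positivity), ← ENNReal.ofReal_mul hl,
    Nat.factorial_succ]
  congr 1
  push_cast
  field_simp
  ring

section CompoundPoisson

variable {Ω S : Type*} [MeasurableSpace Ω] [MeasurableSpace S] {P : Measure Ω} {N : Ω → ℕ}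
  {ξ : ℕ → Ω → S}

lemma iIndepFun_marks (hindep : iIndepFun (m := stmt3FamMS S) (stmt3FamFun N ξ) P) :
    iIndepFun ξ P :=
  hindep.precomp (g := some) (Option.some_injective ℕ)

lemma map_marks_eq_pi [IsProbabilityMeasure P] {π : Measure S} (hξ : ∀ i, Measurable (ξ i))
    (hdist : ∀ i, P.map (ξ i) = π)
    (hindep : iIndepFun (m := stmt3FamMS S) (stmt3FamFun N ξ) P) (m : ℕ) :
    P.map (fun ω (i : Fin m) ↦ ξ i ω) = Measure.pi fun _ ↦ π := by
  rw [(iIndepFun_iff_map_fun_eq_pi_map (f := fun (i : Fin m) ↦ ξ i)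
    fun i ↦ (hξ i).aemeasurable).1 ((iIndepFun_marks hindep).precomp Fin.val_injective)]
  simp only [hdist]

lemma indepFun_count_marks (hN : Measurable N) (hξ : ∀ i, Measurable (ξ i))
    (hindep : iIndepFun (m := stmt3FamMS S) (stmt3FamFun N ξ) P) (m : ℕ) :
    IndepFun N (fun ω (i : Fin m) ↦ ξ i ω) P := by
  let := stmt3FamMS S
  have hmeas : ∀ o, Measurable (stmt3FamFun N ξ o)
    | none => measurable_up.comp hN
    | some i => hξ i
  have hsome (i : Fin m) : some (i : ℕ) ∈ (range m).map ⟨some, Option.some_injective ℕ⟩ := by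
    simp
  exact (hindep.indepFun_finset {none} ((range m).map ⟨some, Option.some_injective ℕ⟩)
    (by simp) hmeas).comp (φ := fun v ↦ (v ⟨none, mem_singleton_self none⟩).down)
    (ψ := fun v (i : Fin m) ↦ v ⟨some i, hsome i⟩)
    (measurable_down.comp (measurable_pi_apply _))
    (measurable_pi_lambda _ fun i ↦ measurable_pi_apply _)

end CompoundPoisson

section Conditioning

variable {Ω ι X : Type*} [MeasurableSpace Ω] [MeasurableSpace ι] [MeasurableSpace X]
  {P : Measure Ω} {N : Ω → ι} {T : Ω → X}

lemma setLIntegral_eq_measure_mul_lintegral_map [Countable ι] [MeasurableSingletonClass ι]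
    (hN : Measurable N) (hT : Measurable T) (hNT : IndepFun N T P) (n : ι) {H : X → ℝ≥0∞}
    (hH : Measurable H) :
    ∫⁻ ω in {ω | N ω = n}, H (T ω) ∂P = P {ω | N ω = n} * ∫⁻ x, H x ∂P.map T := by
  have hind : Measurable (({n} : Set ι).indicator (1 : ι → ℝ≥0∞)) := measurable_of_countable _
  calc ∫⁻ ω in {ω | N ω = n}, H (T ω) ∂P
      = ∫⁻ ω, ({n} : Set ι).indicator 1 (N ω) * H (T ω) ∂P := by
        rw [← lintegral_indicator (s := {ω | N ω = n}) (hN (measurableSet_singleton n))]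
        congr with ω
        by_cases h : N ω = n <;> simp [h]
    _ = P {ω | N ω = n} * ∫⁻ x, H x ∂P.map T := by
        rw [lintegral_mul_eq_lintegral_mul_lintegral_of_indepFun''
          (f := fun ω ↦ ({n} : Set ι).indicator 1 (N ω)) (g := fun ω ↦ H (T ω))
          (hind.comp hN).aemeasurable (hH.comp hT).aemeasurable (hNT.comp hind hH),
          lintegral_map hH hT, ← lintegral_map hind hN,
          lintegral_indicator_one (measurableSet_singleton n),
          Measure.map_apply hN (measurableSet_singleton n)]
        rfl

lemma lintegral_eq_tsum_measure_mul_lintegral_pi {S : Type*} [MeasurableSpace S] {N : Ω → ℕ}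
    {ξ : ℕ → Ω → S} {π : Measure S} (hN : Measurable N) (hξ : ∀ i, Measurable (ξ i))
    (hNξ : ∀ m, IndepFun N (fun ω (i : Fin m) ↦ ξ i ω) P)
    (hlaw : ∀ m, P.map (fun ω (i : Fin m) ↦ ξ i ω) = Measure.pi fun _ ↦ π) (k : ℕ → ℕ)
    {F : ∀ n, (Fin (k n) → S) → ℝ≥0∞} (hF : ∀ n, Measurable (F n)) :
    ∫⁻ ω, F (N ω) (fun i ↦ ξ i ω) ∂P
      = ∑' n, P {ω | N ω = n} * ∫⁻ x, F n x ∂Measure.pi fun _ ↦ π := by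
  have hcover : ⋃ n, N ⁻¹' {n} = Set.univ := Set.iUnion_eq_univ_iff.2 fun ω ↦ ⟨N ω, rfl⟩
  rw [← setLIntegral_univ, ← hcover, lintegral_iUnion (fun n ↦ hN (measurableSet_singleton n))
    (pairwise_disjoint_fiber N)]
  refine tsum_congr fun n ↦ ?_
  have hT : Measurable fun ω (i : Fin (k n)) ↦ ξ i ω := measurable_pi_lambda _ fun i ↦ hξ i
  rw [← hlaw (k n), ← setLIntegral_eq_measure_mul_lintegral_map hN hT (hNξ (k n)) n (hF n)]
  refine setLIntegral_congr_fun (hN (measurableSet_singleton n)) fun ω (h : N ω = n) ↦ ?_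
  rw [h]

end Conditioning

/-- Mecke-type identity for compound Poisson sums: for a Poisson(λ) number `N` of i.i.d. marks
`ξ i` (jointly independent with `N`) with common law `π`,
`E[ Σ_{i<N} f(ξ i, Σ_{j<N, j≠i} g(ξ j)) ] = λ E[ f(ξ N, Σ_{j<N} g(ξ j)) ]`. -/
theorem stmt3 {Ω : Type v} [MeasurableSpace Ω] (P : Measure Ω) [IsProbabilityMeasure P]
    {S : Type u} [MeasurableSpace S]
    (l : ℝ) (hl : 0 < l)
    (N : Ω → ℕ) (hNmeas : Measurable N)
    (hN : ∀ k : ℕ, P {ω | N ω = k}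
      = ENNReal.ofReal (Real.exp (-l) * l ^ k / Nat.factorial k))
    (ξ : ℕ → Ω → S) (hξ : ∀ i, Measurable (ξ i))
    (π : Measure S) [IsProbabilityMeasure π]
    (hdist : ∀ i, Measure.map (ξ i) P = π)
    (hindep : iIndepFun (m := stmt3FamMS S) (stmt3FamFun N ξ) P)
    (g : S → ℝ) (hg : Measurable g)
    (f : S × ℝ → ℝ≥0∞) (hf : Measurable f) :
    ∫⁻ ω, ∑ i ∈ Finset.range (N ω),
        f (ξ i ω, ∑ j ∈ (Finset.range (N ω)).erase i, g (ξ j ω)) ∂P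
      = ENNReal.ofReal l
          * ∫⁻ ω, f (ξ (N ω) ω, ∑ j ∈ Finset.range (N ω), g (ξ j ω)) ∂P := by
  have hNξ := indepFun_count_marks hNmeas hξ hindep
  have hlaw := map_marks_eq_pi hξ hdist hindep
  let Φ (m : ℕ) (x : Fin m → S) (i : Fin m) : ℝ≥0∞ := f (x i, sumExcept g x i)
  have hΦ_meas (m : ℕ) (i : Fin m) : Measurable (Φ m · i) :=
    hf.comp ((measurable_pi_apply i).prodMk (measurable_sumExcept hg i))
  have hΦ_perm (m : ℕ) (x : Fin m → S) (e : Equiv.Perm (Fin m)) (i : Fin m) :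
      Φ m (x ∘ e) i = Φ m x (e i) := by
    simp only [Φ, sumExcept_comp_perm, Function.comp_apply]
  calc _ = ∑' n, P {ω | N ω = n} * ∫⁻ x, ∑ i, Φ n x i ∂Measure.pi fun _ ↦ π :=
        (lintegral_congr fun ω ↦ sum_range_erase_eq_sum_sumExcept f g (ξ · ω) (N ω)).trans
          (lintegral_eq_tsum_measure_mul_lintegral_pi hNmeas hξ hNξ hlaw (fun n ↦ n)
            (F := fun n x ↦ ∑ i, Φ n x i) fun n ↦ measurable_sum _ fun i _ ↦ hΦ_meas n i)
    _ = ∑' m, ENNReal.ofReal l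
          * (P {ω | N ω = m} * ∫⁻ x, Φ (m + 1) x (Fin.last m) ∂Measure.pi fun _ ↦ π) := by
        rw [tsum_eq_zero_add' ENNReal.summable]
        simp only [univ_eq_empty, sum_empty, lintegral_zero, mul_zero, zero_add]
        refine tsum_congr fun m ↦ ?_
        rw [lintegral_sum_pi_eq_card_mul π (hΦ_meas _) (hΦ_perm _) (Fin.last m), Fintype.card_fin,
          ← mul_assoc, ← mul_assoc, mul_comm (P _), hN, hN, natCast_succ_mul_ofReal_poisson hl.le]
    _ = _ := by
        have hrhs (ω : Ω) : f (ξ (N ω) ω, ∑ j ∈ range (N ω), g (ξ j ω))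
            = Φ (N ω + 1) (ξ · ω) (Fin.last (N ω)) :=
          congrArg (fun s ↦ f (ξ (N ω) ω, s)) (sum_range_eq_sumExcept_last g (ξ · ω) (N ω))
        rw [ENNReal.tsum_mul_left, lintegral_congr hrhs]
        exact congrArg _ (lintegral_eq_tsum_measure_mul_lintegral_pi hNmeas hξ hNξ hlaw
          (fun n ↦ n + 1) (F := fun n x ↦ Φ (n + 1) x (Fin.last n)) fun n ↦ hΦ_meas _ _).symm
end

section
/- For every integer m ≥ 1, P( max_{1 ≤ k ≤ m} S_k < 1 ) ≤ 2 · P( S_m ∈ {0, 1} ). -/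
/-!
The signs of the first `m` steps are uniformly distributed on `Fin m → Bool`, so both
probabilities are `2⁻ᵐ` times a number of `±1` paths of length `m`. The number of paths whose
height stays at most `h` equals the number of paths ending in `[-h - 1, h]`: for every `h` at once,
both counts satisfy the same recursion obtained by conditioning on the first step. For `h = 0`,
flipping every step shows that ending in `{-1, 0}` and ending in `{0, 1}` are equally frequent,
so the two probabilities are in fact equal.
-/

open MeasureTheory ProbabilityTheory Finset

lemma sum_fin_filter_val_lt {M : Type*} [AddCommMonoid M] {m k : ℕ} (hk : k ≤ m) (f : ℕ → M) :
    ∑ i : Fin m with i.val < k, f i = ∑ i ∈ range k, f i := by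
  rw [sum_filter, Fin.sum_univ_eq_sum_range (fun i => if i < k then f i else 0), ← sum_filter]
  congr 1
  ext i
  simp only [mem_filter, mem_range]
  omega

lemma card_filter_fin_cons {α : Type*} [Fintype α] {m : ℕ} (p : (Fin (m + 1) → α) → Prop)
    [DecidablePred p] :
    #{b | p b} = ∑ e : α, #{c : Fin m → α | p (Fin.cons e c)} := by
  simp only [card_filter]
  rw [← (Fin.consEquiv fun _ => α).sum_comp, Fintype.sum_prod_type]
  rfl

lemma card_filter_split {α : Type*} (s : Finset α) (f : α → ℤ) {a b c : ℤ} (hab : a ≤ b + 1)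
    (hbc : b ≤ c) :
    #{x ∈ s | a ≤ f x ∧ f x ≤ c} = #{x ∈ s | a ≤ f x ∧ f x ≤ b} + #{x ∈ s | b < f x ∧ f x ≤ c} := by
  rw [← card_filter_add_card_filter_not (fun x => f x ≤ b), filter_filter, filter_filter]
  congr 2 <;> exact filter_congr fun x _ => by omega

namespace BoolWalk

def step (e : Bool) : ℤ := if e then 1 else -1

variable {m : ℕ}

def height (b : Fin m → Bool) (k : ℕ) : ℤ := ∑ i : Fin m with i.val < k, step (b i)

def StaysAtMost (h : ℤ) (b : Fin m → Bool) : Prop := ∀ k ≤ m, height b k ≤ h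

instance (h : ℤ) : DecidablePred (StaysAtMost (m := m) h) := fun _ => Nat.decidableBallLE m _

def countBetween (m : ℕ) (a c : ℤ) : ℕ := #{b : Fin m → Bool | a ≤ height b m ∧ height b m ≤ c}

@[simp]
lemma height_zero (b : Fin m → Bool) : height b 0 = 0 := by simp [height]

@[simp]
lemma height_fin_zero (b : Fin 0 → Bool) (k : ℕ) : height b k = 0 := by simp [height]

@[simp]
lemma height_cons_succ (e : Bool) (c : Fin m → Bool) (k : ℕ) :
    height (Fin.cons e c : Fin (m + 1) → Bool) (k + 1) = step e + height c k := by
  simp [height, sum_filter, Fin.sum_univ_succ]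

lemma height_not (b : Fin m → Bool) (k : ℕ) : height (fun i => !b i) k = -height b k := by
  simp only [height, ← sum_neg_distrib]
  congr! 1 with i
  cases b i <;> rfl

lemma staysAtMost_cons_true (h : ℤ) (c : Fin m → Bool) :
    StaysAtMost h (Fin.cons true c : Fin (m + 1) → Bool) ↔ StaysAtMost (h - 1) c := by
  constructor
  · intro H k hk
    have := H (k + 1) (by omega)
    simp only [height_cons_succ, step] at this
    grind
  · rintro H (_ | k) hk
    · have := H 0 (Nat.zero_le m)
      simp only [height_zero] at this ⊢
      omega
    · have := H k (by omega)
      simp only [height_cons_succ, step]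
      grind

lemma staysAtMost_cons_false {h : ℤ} (hh : 0 ≤ h) (c : Fin m → Bool) :
    StaysAtMost h (Fin.cons false c : Fin (m + 1) → Bool) ↔ StaysAtMost (h + 1) c := by
  constructor
  · intro H k hk
    have := H (k + 1) (by omega)
    simp only [height_cons_succ, step] at this
    grind
  · rintro H (_ | k) hk
    · simpa using hh
    · have := H k (by omega)
      simp only [height_cons_succ, step]
      grind

lemma countBetween_succ (m : ℕ) (a c : ℤ) :
    countBetween (m + 1) a c = countBetween m (a - 1) (c - 1) + countBetween m (a + 1) (c + 1) := by
  rw [countBetween, card_filter_fin_cons, Fintype.sum_bool]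
  congr 1 <;>
    exact congrArg card (filter_congr fun c _ => by simp only [height_cons_succ, step]; grind)

lemma countBetween_split (m : ℕ) {a b c : ℤ} (hab : a ≤ b + 1) (hbc : b ≤ c) :
    countBetween m a c = countBetween m a b + countBetween m (b + 1) c := by
  rw [countBetween, card_filter_split _ _ hab hbc, countBetween, countBetween]
  congr 2

lemma countBetween_eq_zero (m : ℕ) {a c : ℤ} (hca : c < a) : countBetween m a c = 0 :=
  card_eq_zero.2 (filter_eq_empty_iff.2 fun _ _ => by omega)

lemma countBetween_neg (m : ℕ) (a c : ℤ) : countBetween m (-c) (-a) = countBetween m a c := by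
  have hinv : Function.Involutive fun (b : Fin m → Bool) i => !b i :=
    fun b => funext fun i => Bool.not_not (b i)
  refine card_equiv hinv.toPerm fun b => ?_
  simp only [mem_filter, mem_univ, true_and, Function.Involutive.coe_toPerm, height_not]
  omega

theorem card_staysAtMost (m : ℕ) (h : ℤ) :
    #{b : Fin m → Bool | StaysAtMost h b} = countBetween m (-h - 1) h := by
  induction m generalizing h with
  | zero =>
    refine congrArg card (filter_congr fun b _ => ?_)
    simp only [StaysAtMost, height_fin_zero]
    exact ⟨fun H => by have := H 0 le_rfl; omega, fun H _ _ => H.2⟩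
  | succ m ih =>
    rcases lt_or_ge h 0 with hh | hh
    · rw [countBetween_eq_zero _ (by omega)]
      refine card_eq_zero.2 (filter_eq_empty_iff.2 fun b _ H => ?_)
      have := H 0 (Nat.zero_le _)
      simp only [height_zero] at this
      omega
    rw [card_filter_fin_cons, Fintype.sum_bool]
    simp only [staysAtMost_cons_true, staysAtMost_cons_false hh, ih, countBetween_succ]
    rw [countBetween_split m (b := h - 1) (by omega : -(h + 1) - 1 ≤ h - 1 + 1) (by omega),
      countBetween_split m (b := h - 1) (by omega : -h - 1 + 1 ≤ h - 1 + 1) (by omega)]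
    ring_nf

theorem card_staysAtMost_zero (m : ℕ) :
    #{b : Fin m → Bool | StaysAtMost 0 b}
      = #{b : Fin m → Bool | height b m = 0 ∨ height b m = 1} := by
  rw [card_staysAtMost, ← countBetween_neg]
  exact congrArg card (filter_congr fun _ _ => by omega)

end BoolWalk

section SignPattern

variable {Ω ι : Type*}

noncomputable def signPattern (X : ι → Ω → ℝ) (ω : Ω) : ι → Bool := fun i => decide (X i ω = 1)

lemma step_signPattern {X : ι → Ω → ℝ} (hval : ∀ i ω, X i ω = 1 ∨ X i ω = -1) (ω : Ω) (i : ι) :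
    (BoolWalk.step (signPattern X ω i) : ℝ) = X i ω := by
  rcases hval i ω with h | h <;> norm_num [signPattern, BoolWalk.step, h]

lemma signPattern_preimage_singleton {X : ι → Ω → ℝ} (hval : ∀ i ω, X i ω = 1 ∨ X i ω = -1)
    (b : ι → Bool) : signPattern X ⁻¹' {b} = ⋂ i, X i ⁻¹' {(BoolWalk.step (b i) : ℝ)} := by
  ext ω
  simp only [Set.mem_preimage, Set.mem_singleton_iff, Set.mem_iInter, funext_iff, signPattern]
  refine forall_congr' fun i => ?_
  rcases hval i ω with h | h <;> cases b i <;> norm_num [BoolWalk.step, h]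

lemma measure_signPattern_preimage [Fintype ι] [MeasurableSpace Ω] {P : Measure Ω} {X : ι → Ω → ℝ}
    (hmeas : ∀ i, Measurable (X i)) (hval : ∀ i ω, X i ω = 1 ∨ X i ω = -1)
    (hup : ∀ i, P {ω | X i ω = 1} = 2⁻¹) (hdown : ∀ i, P {ω | X i ω = -1} = 2⁻¹)
    (hindep : iIndepFun X P) (s : Finset (ι → Bool)) :
    P (signPattern X ⁻¹' s) = #s * 2⁻¹ ^ Fintype.card ι := by
  have hfiber : ∀ b : ι → Bool, P (signPattern X ⁻¹' {b}) = 2⁻¹ ^ Fintype.card ι := by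
    intro b
    rw [signPattern_preimage_singleton hval,
      hindep.meas_iInter fun i => ⟨_, measurableSet_singleton _, rfl⟩, ← card_univ, ← prod_const]
    refine prod_congr rfl fun i _ => ?_
    cases b i
    · simpa [BoolWalk.step, Set.preimage] using hdown i
    · simpa [BoolWalk.step, Set.preimage] using hup i
  have hfiber_meas : ∀ b : ι → Bool, MeasurableSet (signPattern X ⁻¹' {b}) := fun b => by
    rw [signPattern_preimage_singleton hval]
    exact MeasurableSet.iInter fun i => hmeas i (measurableSet_singleton _)
  rw [← sum_measure_preimage_singleton s fun b _ => hfiber_meas b,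
    sum_congr rfl fun b _ => hfiber b, sum_const, nsmul_eq_mul]

end SignPattern

section PartialSums

variable {Ω : Type*} {X : ℕ → Ω → ℝ}

lemma sum_range_eq_height (hval : ∀ i ω, X i ω = 1 ∨ X i ω = -1) {m k : ℕ} (hk : k ≤ m) (ω : Ω) :
    ∑ i ∈ range k, X i ω = BoolWalk.height (signPattern (fun i : Fin m => X i) ω) k := by
  rw [BoolWalk.height, Int.cast_sum, ← sum_fin_filter_val_lt hk]
  exact sum_congr rfl fun i _ => (step_signPattern (fun i => hval i) ω i).symm

lemma preimage_signPattern_staysAtMost_zero (hval : ∀ i ω, X i ω = 1 ∨ X i ω = -1) (m : ℕ) :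
    signPattern (fun i : Fin m => X i) ⁻¹' ↑(univ.filter (BoolWalk.StaysAtMost (m := m) 0))
      = {ω | ∀ k, 1 ≤ k → k ≤ m → ∑ i ∈ range k, X i ω < 1} := by
  ext ω
  simp only [Set.mem_preimage, mem_coe, Finset.mem_filter, mem_univ, true_and, Set.mem_ofPred_eq,
    BoolWalk.StaysAtMost]
  refine ⟨fun H k _ hk => ?_, fun H k hk => ?_⟩
  · rw [sum_range_eq_height hval hk]
    exact_mod_cast (H k hk).trans_lt one_pos
  · rcases k.eq_zero_or_pos with rfl | hk1
    · simp
    · have := H k hk1 hk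
      rw [sum_range_eq_height hval hk] at this
      exact Int.lt_add_one_iff.1 (by exact_mod_cast this)

lemma preimage_signPattern_height_mem_zero_one (hval : ∀ i ω, X i ω = 1 ∨ X i ω = -1) (m : ℕ) :
    signPattern (fun i : Fin m => X i) ⁻¹'
        ↑(univ.filter fun b : Fin m → Bool => BoolWalk.height b m = 0 ∨ BoolWalk.height b m = 1)
      = {ω | ∑ i ∈ range m, X i ω = 0 ∨ ∑ i ∈ range m, X i ω = 1} := by
  ext ω
  simp only [Set.mem_preimage, mem_coe, Finset.mem_filter, mem_univ, true_and, Set.mem_ofPred_eq,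
    sum_range_eq_height hval le_rfl]
  norm_cast

end PartialSums

theorem stmt6_general {Ω : Type*} [MeasurableSpace Ω] (P : Measure Ω) [IsProbabilityMeasure P]
    (X : ℕ → Ω → ℝ) (hmeas : ∀ i, Measurable (X i))
    (hval : ∀ i, ∀ ω, X i ω = 1 ∨ X i ω = -1)
    (hup : ∀ i, P {ω | X i ω = 1} = ENNReal.ofReal (1 / 2))
    (hdown : ∀ i, P {ω | X i ω = -1} = ENNReal.ofReal (1 / 2))
    (hindep : iIndepFun X P)
    (S : ℕ → Ω → ℝ) (hS : ∀ k ω, S k ω = ∑ i ∈ Finset.range k, X i ω)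
    (m : ℕ) :
    P {ω | ∀ k, 1 ≤ k → k ≤ m → S k ω < 1}
      ≤ 2 * P {ω | S m ω = 0 ∨ S m ω = 1} := by
  obtain rfl : S = fun k ω => ∑ i ∈ range k, X i ω := funext₂ hS
  beta_reduce
  have half : ENNReal.ofReal (1 / 2) = 2⁻¹ := by
    rw [one_div, ENNReal.ofReal_inv_of_pos two_pos, ENNReal.ofReal_ofNat]
  have hP := measure_signPattern_preimage (X := fun i : Fin m => X i) (fun i => hmeas i)
    (fun i => hval i) (fun i => (hup i).trans half) (fun i => (hdown i).trans half)
    (hindep.precomp Fin.val_injective)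
  rw [← preimage_signPattern_staysAtMost_zero hval, ← preimage_signPattern_height_mem_zero_one hval,
    hP, hP, BoolWalk.card_staysAtMost_zero]
  exact le_mul_of_one_le_left bot_le one_le_two

/-- For the symmetric simple random walk `S k = X 0 + ⋯ + X (k-1)` with i.i.d. `±1` steps,
`P(max_{1 ≤ k ≤ m} S k < 1) ≤ 2 P(S m ∈ {0, 1})` for every `m ≥ 1`. -/
theorem stmt6 {Ω : Type*} [MeasurableSpace Ω] (P : Measure Ω) [IsProbabilityMeasure P]
    (X : ℕ → Ω → ℝ) (hmeas : ∀ i, Measurable (X i))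
    (hval : ∀ i, ∀ ω, X i ω = 1 ∨ X i ω = -1)
    (hup : ∀ i, P {ω | X i ω = 1} = ENNReal.ofReal (1 / 2))
    (hdown : ∀ i, P {ω | X i ω = -1} = ENNReal.ofReal (1 / 2))
    (hindep : iIndepFun X P)
    (S : ℕ → Ω → ℝ) (hS : ∀ k ω, S k ω = ∑ i ∈ Finset.range k, X i ω)
    (m : ℕ) (hm : 1 ≤ m) :
    P {ω | ∀ k, 1 ≤ k → k ≤ m → S k ω < 1}
      ≤ 2 * P {ω | S m ω = 0 ∨ S m ω = 1} :=
  stmt6_general P X hmeas hval hup hdown hindep S hS m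
end

section
/- Let γ : (0,∞) → (0,∞) be nondecreasing and let t > 0. Then the set E_t = {ε > 0 : ε²·γ(ε) ≤ 1/t} is nonempty and bounded above; writing ε_t = sup E_t, one has ε + 1/√(γ(ε)·t) ≥ ε_t for every ε > 0, and hence inf_{ε>0} ( ε + 1/√(γ(ε)·t) ) ≥ ε_t. Moreover, if additionally γ(ε) ≤ C for all ε > 0 for some constant C > 0, then ε_t ≥ 1/√(C·t). -/
/-!
If `ε ≤ x` and `x` is admissible, i.e. `x² γ(x) t ≤ 1`, then monotonicity gives `x² γ(ε) t ≤ 1`,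
that is `x ≤ 1/√(γ(ε) t)`. Hence every admissible `x` is at most `max ε (1/√(γ(ε) t))`, which
bounds the supremum. Conversely, `min ε (1/√(γ(ε) t))` is admissible, and so is `1/√(C t)` when
`γ ≤ C`.
-/

open Set

lemma sq_mul_le_one_iff_le_one_div_sqrt {c x : ℝ} (hc : 0 < c) (hx : 0 ≤ x) :
    x ^ 2 * c ≤ 1 ↔ x ≤ 1 / √c := by
  rw [one_div, ← Real.sqrt_inv, Real.le_sqrt hx (inv_nonneg.2 hc.le), inv_eq_one_div,
    le_div_iff₀ hc]

def admissibleScales (γ : ℝ → ℝ) (t : ℝ) : Set ℝ := {ε | 0 < ε ∧ ε ^ 2 * γ ε ≤ 1 / t}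

section AdmissibleScales

variable {γ : ℝ → ℝ} {t : ℝ}

lemma mem_admissibleScales_iff (ht : 0 < t) {x : ℝ} :
    x ∈ admissibleScales γ t ↔ 0 < x ∧ x ^ 2 * (γ x * t) ≤ 1 := by
  rw [admissibleScales, mem_ofPred_eq, ← mul_assoc, ← le_div_iff₀ ht]

lemma le_one_div_sqrt_of_mem_admissibleScales (hpos : ∀ ε, 0 < ε → 0 < γ ε)
    (hmono : MonotoneOn γ (Ioi 0)) (ht : 0 < t) {ε x : ℝ} (hε : 0 < ε) (hεx : ε ≤ x)
    (hx : x ∈ admissibleScales γ t) : x ≤ 1 / √(γ ε * t) := by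
  obtain ⟨hx₀, hxγ⟩ := (mem_admissibleScales_iff ht).1 hx
  refine (sq_mul_le_one_iff_le_one_div_sqrt (mul_pos (hpos ε hε) ht) hx₀.le).1 ?_
  calc x ^ 2 * (γ ε * t) ≤ x ^ 2 * (γ x * t) := by
        gcongr
        exact hmono hε (hε.trans_le hεx) hεx
    _ ≤ 1 := hxγ

lemma le_add_one_div_sqrt_of_mem_admissibleScales (hpos : ∀ ε, 0 < ε → 0 < γ ε)
    (hmono : MonotoneOn γ (Ioi 0)) (ht : 0 < t) {ε x : ℝ} (hε : 0 < ε)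
    (hx : x ∈ admissibleScales γ t) : x ≤ ε + 1 / √(γ ε * t) := by
  have hroot : 0 < 1 / √(γ ε * t) := by
    have := hpos ε hε
    positivity
  rcases le_total x ε with hxε | hεx
  · linarith
  · linarith [le_one_div_sqrt_of_mem_admissibleScales hpos hmono ht hε hεx hx]

lemma min_one_div_sqrt_mem_admissibleScales (hpos : ∀ ε, 0 < ε → 0 < γ ε)
    (hmono : MonotoneOn γ (Ioi 0)) (ht : 0 < t) {ε : ℝ} (hε : 0 < ε) :
    min ε (1 / √(γ ε * t)) ∈ admissibleScales γ t := by
  have hεt : 0 < γ ε * t := mul_pos (hpos ε hε) ht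
  set x := min ε (1 / √(γ ε * t))
  have hx₀ : 0 < x := lt_min hε (by positivity)
  refine (mem_admissibleScales_iff ht).2 ⟨hx₀, ?_⟩
  calc x ^ 2 * (γ x * t) ≤ x ^ 2 * (γ ε * t) := by
        gcongr
        exact hmono hx₀ hε (min_le_left _ _)
    _ ≤ 1 := (sq_mul_le_one_iff_le_one_div_sqrt hεt hx₀.le).2 (min_le_right _ _)

lemma one_div_sqrt_mem_admissibleScales_of_le (ht : 0 < t) {C : ℝ} (hC : 0 < C)
    (hγC : ∀ ε, 0 < ε → γ ε ≤ C) : 1 / √(C * t) ∈ admissibleScales γ t := by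
  have hCt : 0 < C * t := mul_pos hC ht
  set x := 1 / √(C * t)
  have hx₀ : 0 < x := by positivity
  refine (mem_admissibleScales_iff ht).2 ⟨hx₀, ?_⟩
  calc x ^ 2 * (γ x * t) ≤ x ^ 2 * (C * t) := by
        gcongr
        exact hγC x hx₀
    _ ≤ 1 := (sq_mul_le_one_iff_le_one_div_sqrt hCt hx₀.le).2 le_rfl

end AdmissibleScales

/-- For a nondecreasing positive `γ` on `(0,∞)` and `t > 0`, the set
`E_t = {ε > 0 : ε² γ(ε) ≤ 1/t}` is nonempty and bounded above, its supremum `ε_t` satisfies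
`ε + 1/√(γ(ε) t) ≥ ε_t` for all `ε > 0` (hence the infimum of the left-hand side over `ε > 0`
is `≥ ε_t`); and if moreover `γ ≤ C`, then `ε_t ≥ 1/√(C t)`. -/
theorem stmt8 (γ : ℝ → ℝ) (hpos : ∀ ε : ℝ, 0 < ε → 0 < γ ε)
    (hmono : ∀ ε₁ ε₂ : ℝ, 0 < ε₁ → ε₁ ≤ ε₂ → γ ε₁ ≤ γ ε₂)
    (t : ℝ) (ht : 0 < t) :
    ({ε : ℝ | 0 < ε ∧ ε ^ 2 * γ ε ≤ 1 / t}).Nonempty ∧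
    BddAbove {ε : ℝ | 0 < ε ∧ ε ^ 2 * γ ε ≤ 1 / t} ∧
    (∀ ε : ℝ, 0 < ε →
      sSup {ε : ℝ | 0 < ε ∧ ε ^ 2 * γ ε ≤ 1 / t} ≤ ε + 1 / Real.sqrt (γ ε * t)) ∧
    (sSup {ε : ℝ | 0 < ε ∧ ε ^ 2 * γ ε ≤ 1 / t}
      ≤ ⨅ ε : {ε : ℝ // 0 < ε}, ((ε : ℝ) + 1 / Real.sqrt (γ ε * t))) ∧
    (∀ C : ℝ, 0 < C → (∀ ε : ℝ, 0 < ε → γ ε ≤ C) →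
      1 / Real.sqrt (C * t) ≤ sSup {ε : ℝ | 0 < ε ∧ ε ^ 2 * γ ε ≤ 1 / t}) := by
  have hmono' : MonotoneOn γ (Ioi 0) := fun a ha b _ hab => hmono a b ha hab
  have hne : (admissibleScales γ t).Nonempty :=
    ⟨_, min_one_div_sqrt_mem_admissibleScales hpos hmono' ht one_pos⟩
  have hbdd : BddAbove (admissibleScales γ t) :=
    ⟨_, fun _ hx => le_add_one_div_sqrt_of_mem_admissibleScales hpos hmono' ht one_pos hx⟩
  have hsup (ε : ℝ) (hε : 0 < ε) : sSup (admissibleScales γ t) ≤ ε + 1 / √(γ ε * t) :=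
    csSup_le hne fun _ hx => le_add_one_div_sqrt_of_mem_admissibleScales hpos hmono' ht hε hx
  exact ⟨hne, hbdd, hsup, le_ciInf fun ε => hsup ε ε.2, fun C hC hγC =>
    le_csSup hbdd (one_div_sqrt_mem_admissibleScales_of_le ht hC hγC)⟩
end

section
/- For every λ > 0, Σ_{k=1}^∞ λ^k / (√k · k!) ≤ √2 · e^λ / √λ. -/
/-!
With `p n = λ^n / n!`, AM-GM gives `√(2λ) ≤ √n (1 + λ/(n+1))` for `n ≥ 1`, i.e.
`p n / √n ≤ (p n + p (n+1)) / √(2λ)`. Summing, each of the two shifted exponential series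
is at most `e^λ`, so the sum is at most `2 e^λ / √(2λ) = √2 e^λ / √λ`.
-/

open Real Nat

lemma tsum_pow_add_div_factorial_le_exp {x : ℝ} (hx : 0 ≤ x) (j : ℕ) :
    ∑' k : ℕ, x ^ (k + j) / (k + j)! ≤ exp x := by
  have hexp := summable_pow_div_factorial x
  rw [exp_eq_exp_ℝ, NormedSpace.exp_eq_tsum_div]
  exact Summable.tsum_le_tsum_of_inj (· + j) (add_left_injective j)
    (fun _ _ => by positivity) (fun _ => le_rfl) (hexp.comp_injective (add_left_injective j)) hexp

lemma sqrt_two_mul_le_sqrt_mul_one_add_div {x y : ℝ} (hx : 0 ≤ x) (hy : 1 ≤ y) :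
    √(2 * x) ≤ √y * (1 + x / (y + 1)) := by
  have hy1 : 0 < y + 1 := by linarith
  rw [← sqrt_sq (by positivity : 0 ≤ √y * (1 + x / (y + 1))), mul_pow, sq_sqrt (by linarith)]
  refine Real.sqrt_le_sqrt ?_
  calc 2 * x ≤ 4 * y * x / (y + 1) := by rw [le_div_iff₀ hy1]; nlinarith
    _ = y * (1 + x / (y + 1)) ^ 2 - y * (1 - x / (y + 1)) ^ 2 := by field_simp; ring
    _ ≤ y * (1 + x / (y + 1)) ^ 2 := by
      nlinarith [mul_nonneg (by linarith : 0 ≤ y) (sq_nonneg (1 - x / (y + 1)))]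

lemma pow_div_sqrt_mul_factorial_le {x : ℝ} (hx : 0 < x) (n : ℕ) (hn : 1 ≤ n) :
    x ^ n / (√n * n !) ≤ (x ^ n / n ! + x ^ (n + 1) / (n + 1)!) / √(2 * x) := by
  have hn' : (1 : ℝ) ≤ n := by exact_mod_cast hn
  have hfac : ((n + 1)! : ℝ) = (n + 1) * n ! := by push_cast [factorial_succ]; ring
  have hsum : x ^ n / n ! + x ^ (n + 1) / (n + 1)! = x ^ n / n ! * (1 + x / (n + 1)) := by
    rw [hfac, pow_succ]; field_simp
  have key := sqrt_two_mul_le_sqrt_mul_one_add_div hx.le hn'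
  calc x ^ n / (√n * n !) = x ^ n / n ! / √n := div_mul_eq_div_div_swap _ _ _
    _ ≤ x ^ n / n ! * (1 + x / (n + 1)) / √(2 * x) := by
      rw [div_le_div_iff₀ (by positivity) (by positivity), mul_assoc]
      exact mul_le_mul_of_nonneg_left (by linarith) (by positivity)
    _ = (x ^ n / n ! + x ^ (n + 1) / (n + 1)!) / √(2 * x) := by rw [hsum]

/-- For every `λ > 0`, `Σ_{k ≥ 1} λ^k / (√k ⬝ k!) ≤ √2 ⬝ e^λ / √λ`. -/
theorem stmt10 (l : ℝ) (hl : 0 < l) :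
    ∑' k : ℕ, l ^ (k + 1) / (Real.sqrt (k + 1) * Nat.factorial (k + 1))
      ≤ Real.sqrt 2 * Real.exp l / Real.sqrt l := by
  have hs (j : ℕ) : Summable fun k : ℕ => l ^ (k + j) / (k + j)! :=
    (summable_pow_div_factorial l).comp_injective (add_left_injective j)
  have hg := ((hs 1).add (hs 2)).div_const √(2 * l)
  have hterm (k : ℕ) : l ^ (k + 1) / (√(k + 1) * (k + 1)!)
      ≤ (l ^ (k + 1) / (k + 1)! + l ^ (k + 2) / (k + 2)!) / √(2 * l) := by
    simpa using pow_div_sqrt_mul_factorial_le hl (k + 1) le_add_self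
  calc ∑' k : ℕ, l ^ (k + 1) / (√(k + 1) * (k + 1)!)
      ≤ ∑' k : ℕ, (l ^ (k + 1) / (k + 1)! + l ^ (k + 2) / (k + 2)!) / √(2 * l) :=
        (hg.of_nonneg_of_le (fun _ => by positivity) hterm).tsum_le_tsum hterm hg
    _ = (∑' k : ℕ, l ^ (k + 1) / (k + 1)! + ∑' k : ℕ, l ^ (k + 2) / (k + 2)!) / √(2 * l) := by
        rw [tsum_div_const, (hs 1).tsum_add (hs 2)]
    _ ≤ (exp l + exp l) / √(2 * l) := by
        gcongr <;> exact tsum_pow_add_div_factorial_le_exp hl.le _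
    _ = √2 * exp l / √l := by
        have := sqrt_pos.2 hl
        rw [sqrt_mul zero_le_two]
        field_simp
        rw [sq_sqrt zero_le_two]
        ring
end

section
/- Let h : ℕ → ℝ satisfy Σ_{k=0}^∞ q_k h_k² < ∞, and let μ_h denote the pushforward of μ under the translation z ↦ z + h of ℝ^ℕ (coordinatewise addition). Then μ_h and μ are mutually absolutely continuous (i.e. μ_h ≪ μ and μ ≪ μ_h). -/
/-!
For probability measures `νₖ` and densities `fₖ ≥ 0` with `∫ fₖ dνₖ = 1`, the partial products
`Dₙ(x) = ∏_{k<n} fₖ(xₖ)` satisfy `⟪Dₙ, Dₘ⟫ = Eₙ := ∏_{k<n} ∫ fₖ² dνₖ` in `L²(⊗ νₖ)` for `n ≤ m`,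
hence `‖Dₘ - Dₙ‖² = Eₘ - Eₙ`. When `Eₙ` converges, `Dₙ` has an `L²` limit `W ≥ 0`, and
`⊗ (fₖ νₖ) = W · ⊗ νₖ` because both sides agree on boxes.

`N(m, v)` has density `exp((m x - m²/2)/v)` with respect to `N(0, v)`, whose square integrates to
`exp(m²/v)`, so for Gaussians `Eₙ = exp(∑_{k<n} mₖ²/vₖ)`. The translate of `⊗ N(0, 1/qₖ)` by `h`
is `⊗ N(hₖ, 1/qₖ)`, and both absolute continuities are instances of `⊗ N(mₖ, vₖ) ≪ ⊗ N(m'ₖ, vₖ)`,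
which reduces to `m' = 0` by translation.
-/

open MeasureTheory ProbabilityTheory Filter Finset
open scoped NNReal ENNReal Topology

theorem cauchySeq_of_dist_sq_eq_sub {α : Type*} [PseudoMetricSpace α] {F : ℕ → α}
    {E : ℕ → ℝ} (hE : CauchySeq E)
    (hF : ∀ n m, n ≤ m → dist (F n) (F m) ^ 2 = E m - E n) :
    CauchySeq F := by
  rw [Metric.cauchySeq_iff] at hE ⊢
  intro ε hε
  obtain ⟨N, hN⟩ := hE (ε ^ 2) (by positivity)
  refine ⟨N, fun m hm n hn => ?_⟩
  have key : ∀ a b, N ≤ a → N ≤ b → a ≤ b → dist (F a) (F b) < ε := fun a b ha hb hab =>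
    pow_lt_pow_iff_left₀ dist_nonneg hε.le two_ne_zero |>.1 <| by
      rw [hF a b hab]
      exact (le_abs_self _).trans_lt (Real.dist_eq _ _ ▸ hN b hb a ha)
  rcases le_total m n with hmn | hnm
  · exact key m n hm hn hmn
  · exact dist_comm (F m) (F n) ▸ key n m hn hm hnm

namespace MeasureTheory

section InfinitePiProd

variable {ι : Type*} {X : ι → Type*} [∀ i, MeasurableSpace (X i)]
  {ν : ∀ i, Measure (X i)} [∀ i, IsProbabilityMeasure (ν i)] {g : ∀ i, X i → ℝ}

theorem integrable_finset_prod_infinitePi (s : Finset ι) (hg : ∀ i, Integrable (g i) (ν i)) :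
    Integrable (fun x => ∏ i ∈ s, g i (x i)) (Measure.infinitePi ν) := by
  have h := Integrable.fintype_prod_dep (μ := fun i : s => ν i) fun i => hg i
  rw [← Measure.infinitePi_map_restrict] at h
  simpa only [Function.comp_def, Finset.restrict, Finset.prod_coe_sort s fun i => g i _]
    using h.comp_measurable (measurable_restrict s)

theorem integral_finset_prod_infinitePi (s : Finset ι) (hg : ∀ i, Integrable (g i) (ν i)) :
    ∫ x, ∏ i ∈ s, g i (x i) ∂Measure.infinitePi ν = ∏ i ∈ s, ∫ y, g i y ∂ν i := by
  have h := integral_restrict_infinitePi ν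
    (Integrable.fintype_prod_dep (μ := fun i : s => ν i) fun i => hg i).aestronglyMeasurable
  rw [integral_fintype_prod_eq_prod] at h
  simpa only [Finset.restrict, Finset.prod_coe_sort s fun i => g i _,
    Finset.prod_coe_sort s fun i => ∫ y, g i y ∂ν i] using h

end InfinitePiProd

section ProductDensity

variable {X : ℕ → Type*} [∀ k, MeasurableSpace (X k)]
  {ν : ∀ k, Measure (X k)} [∀ k, IsProbabilityMeasure (ν k)] {f : ∀ k, X k → ℝ}

def partialDensity (f : ∀ k, X k → ℝ) (n : ℕ) (x : ∀ k, X k) : ℝ := ∏ k ∈ range n, f k (x k)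

theorem memLp_partialDensity (hf : ∀ k, MemLp (f k) 2 (ν k)) (n : ℕ) :
    MemLp (partialDensity f n) 2 (Measure.infinitePi ν) := by
  refine (memLp_two_iff_integrable_sq (integrable_finset_prod_infinitePi _
    fun k => (hf k).integrable one_le_two).aestronglyMeasurable).2 ?_
  simpa only [partialDensity, ← prod_pow] using
    integrable_finset_prod_infinitePi (range n) fun k => (hf k).integrable_sq

theorem integral_partialDensity_mul (hf : ∀ k, MemLp (f k) 2 (ν k))
    (hf_one : ∀ k, ∫ y, f k y ∂ν k = 1) {n m : ℕ} (hnm : n ≤ m) :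
    ∫ x, partialDensity f n x * partialDensity f m x ∂Measure.infinitePi ν
      = ∏ k ∈ range n, ∫ y, f k y ^ 2 ∂ν k := by
  classical
  set g : ∀ k, X k → ℝ := fun k y => if k ∈ range n then f k y ^ 2 else f k y
  have hg : ∀ k, Integrable (g k) (ν k) := fun k => by
    by_cases hk : k ∈ range n
    · simpa only [g, hk, if_true] using (hf k).integrable_sq
    · simpa only [g, hk, if_false] using (hf k).integrable one_le_two
  have hsub : range n ⊆ range m := range_subset_range.2 hnm
  have hprod : ∀ x,
      partialDensity f n x * partialDensity f m x = ∏ k ∈ range m, g k (x k) := by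
    intro x
    simp only [partialDensity, g, prod_ite, filter_mem_eq_inter, filter_notMem_eq_sdiff]
    rw [inter_eq_right.2 hsub, ← prod_sdiff hsub, prod_pow]
    ring
  have hint : ∀ k, ∫ y, g k y ∂ν k = if k ∈ range n then ∫ y, f k y ^ 2 ∂ν k else 1 := by
    intro k
    by_cases hk : k ∈ range n <;> simp only [g, hk, if_true, if_false, hf_one]
  simp only [hprod, integral_finset_prod_infinitePi _ hg, hint, prod_ite_mem,
    inter_eq_right.2 hsub]

theorem setIntegral_pi_partialDensity (hf : ∀ k, MemLp (f k) 2 (ν k))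
    (hf_one : ∀ k, ∫ y, f k y ∂ν k = 1) {s : Finset ℕ} {A : ∀ k, Set (X k)}
    (hA : ∀ k, MeasurableSet (A k)) {n : ℕ} (hsn : s ⊆ range n) :
    ∫ x in Set.pi s A, partialDensity f n x ∂Measure.infinitePi ν
      = ∏ k ∈ s, ∫ y in A k, f k y ∂ν k := by
  classical
  set g : ∀ k, X k → ℝ := fun k y => if k ∈ s then (A k).indicator (f k) y else f k y
  have hg : ∀ k, Integrable (g k) (ν k) := fun k => by
    by_cases hk : k ∈ s
    · simpa only [g, hk, if_true] using ((hf k).integrable one_le_two).indicator (hA k)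
    · simpa only [g, hk, if_false] using (hf k).integrable one_le_two
  have hprod : ∀ x, (Set.pi s A).indicator (partialDensity f n) x
      = ∏ k ∈ range n, g k (x k) := by
    intro x
    by_cases hx : x ∈ Set.pi s A
    · rw [Set.indicator_of_mem hx]
      refine prod_congr rfl fun k _ => ?_
      by_cases hk : k ∈ s
      · simp only [g, hk, if_true, Set.indicator_of_mem (hx k hk)]
      · simp only [g, hk, if_false]
    · obtain ⟨k, hk, hxk⟩ : ∃ k ∈ s, x k ∉ A k := by simpa [Set.mem_pi] using hx
      rw [Set.indicator_of_notMem hx, eq_comm]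
      exact prod_eq_zero (hsn hk) (by simp only [g, hk, if_true, Set.indicator_of_notMem hxk])
  have hint : ∀ k, ∫ y, g k y ∂ν k = if k ∈ s then ∫ y in A k, f k y ∂ν k else 1 := by
    intro k
    by_cases hk : k ∈ s <;>
      simp only [g, hk, if_true, if_false, hf_one, integral_indicator (hA k)]
  rw [← integral_indicator (MeasurableSet.pi s.countable_toSet fun k _ => hA k)]
  simp only [hprod, integral_finset_prod_infinitePi _ hg, hint, prod_ite_mem,
    inter_eq_right.2 hsn]

theorem exists_tendsto_setIntegral_partialDensity (hf_nonneg : ∀ k y, 0 ≤ f k y)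
    (hf : ∀ k, MemLp (f k) 2 (ν k)) (hf_one : ∀ k, ∫ y, f k y ∂ν k = 1) {L : ℝ}
    (hL : Tendsto (fun n => ∏ k ∈ range n, ∫ y, f k y ^ 2 ∂ν k) atTop (𝓝 L)) :
    ∃ W : (∀ k, X k) → ℝ, Integrable W (Measure.infinitePi ν) ∧
      0 ≤ᵐ[Measure.infinitePi ν] W ∧ ∀ B, MeasurableSet B →
        Tendsto (fun n => ∫ x in B, partialDensity f n x ∂Measure.infinitePi ν) atTop
          (𝓝 (∫ x in B, W x ∂Measure.infinitePi ν)) := by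
  set μ := Measure.infinitePi ν
  set F : ℕ → Lp ℝ 2 μ := fun n => (memLp_partialDensity hf n).toLp
  have hF : ∀ n, F n =ᵐ[μ] partialDensity f n :=
    fun n => (memLp_partialDensity hf n).coeFn_toLp
  have hinner : ∀ n m, n ≤ m → inner ℝ (F n) (F m) = ∏ k ∈ range n, ∫ y, f k y ^ 2 ∂ν k :=
    fun n m hnm => by
      rw [L2.inner_def, ← integral_partialDensity_mul hf hf_one hnm]
      refine integral_congr_ae ?_
      filter_upwards [hF n, hF m] with x hn hm
      simp [hn, hm, mul_comm]
  have hcauchy : CauchySeq F := cauchySeq_of_dist_sq_eq_sub hL.cauchySeq fun n m hnm => by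
    rw [dist_eq_norm, norm_sub_sq_real, ← real_inner_self_eq_norm_sq,
      ← real_inner_self_eq_norm_sq, hinner n m hnm, hinner n n le_rfl, hinner m m le_rfl]
    ring
  obtain ⟨G, hG⟩ := cauchySeq_tendsto_of_complete hcauchy
  have hG_nonneg : 0 ≤ G := ge_of_tendsto' hG fun n => (Lp.coeFn_nonneg _).1 <|
    (hF n).mono fun x hx => hx ▸ prod_nonneg fun k _ => hf_nonneg k (x k)
  refine ⟨G, (Lp.memLp G).integrable one_le_two, (Lp.coeFn_nonneg G).2 hG_nonneg,
    fun B hB => ?_⟩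
  -- `∫ x in B, φ x ∂μ = ⟪𝟙_B, φ⟫` is continuous in `φ ∈ L²(μ)`.
  have h := (tendsto_const_nhds
    (x := indicatorConstLp 2 hB (measure_ne_top μ B) (1 : ℝ))).inner (𝕜 := ℝ) hG
  simp only [L2.inner_indicatorConstLp_one] at h
  refine h.congr fun n => integral_congr_ae ?_
  exact ae_restrict_of_ae (hF n)

theorem infinitePi_withDensity_absolutelyContinuous (hf_nonneg : ∀ k y, 0 ≤ f k y)
    (hf : ∀ k, MemLp (f k) 2 (ν k)) (hf_one : ∀ k, ∫ y, f k y ∂ν k = 1) {L : ℝ}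
    (hL : Tendsto (fun n => ∏ k ∈ range n, ∫ y, f k y ^ 2 ∂ν k) atTop (𝓝 L)) :
    Measure.infinitePi (fun k => (ν k).withDensity fun y => ENNReal.ofReal (f k y))
      ≪ Measure.infinitePi ν := by
  obtain ⟨W, hW_int, hW_nonneg, hW⟩ :=
    exists_tendsto_setIntegral_partialDensity hf_nonneg hf hf_one hL
  have hf_int : ∀ k, Integrable (f k) (ν k) := fun k => (hf k).integrable one_le_two
  have hdensity_apply : ∀ k {A : Set (X k)}, MeasurableSet A →
      (ν k).withDensity (fun y => ENNReal.ofReal (f k y)) A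
        = ENNReal.ofReal (∫ y in A, f k y ∂ν k) := fun k A hA => by
    rw [withDensity_apply _ hA, ofReal_integral_eq_lintegral_ofReal (hf_int k).restrict
      (ae_of_all _ (hf_nonneg k))]
  have : ∀ k, IsProbabilityMeasure ((ν k).withDensity fun y => ENNReal.ofReal (f k y)) :=
    fun k => ⟨by
      rw [hdensity_apply k .univ, Measure.restrict_univ, hf_one, ENNReal.ofReal_one]⟩
  suffices h : (Measure.infinitePi ν).withDensity (fun x => ENNReal.ofReal (W x))
      = Measure.infinitePi (fun k => (ν k).withDensity fun y => ENNReal.ofReal (f k y)) from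
    h ▸ withDensity_absolutelyContinuous _ _
  refine Measure.eq_infinitePi _ fun s A hA => ?_
  have hpi : MeasurableSet (Set.pi s A) := .pi s.countable_toSet fun k _ => hA k
  obtain ⟨N, hN⟩ := s.exists_nat_subset_range
  have hlim :
      ∫ x in Set.pi s A, W x ∂Measure.infinitePi ν = ∏ k ∈ s, ∫ y in A k, f k y ∂ν k :=
    tendsto_nhds_unique (hW _ hpi) <| tendsto_atTop_of_eventually_const fun n hn =>
      setIntegral_pi_partialDensity hf hf_one hA (hN.trans (range_subset_range.2 hn))
  rw [withDensity_apply _ hpi, ← ofReal_integral_eq_lintegral_ofReal hW_int.restrict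
    (ae_restrict_of_ae hW_nonneg), hlim,
    ENNReal.ofReal_prod_of_nonneg fun k _ =>
      setIntegral_nonneg (hA k) fun y _ => hf_nonneg k y]
  exact prod_congr rfl fun k _ => (hdensity_apply k (hA k)).symm

end ProductDensity

end MeasureTheory

namespace ProbabilityTheory

noncomputable def gaussianShiftDensity (v : ℝ≥0) (m x : ℝ) : ℝ :=
  Real.exp ((m * x - m ^ 2 / 2) / v)

theorem gaussianShiftDensity_pos (v : ℝ≥0) (m x : ℝ) : 0 < gaussianShiftDensity v m x :=
  Real.exp_pos _

theorem measurable_gaussianShiftDensity (v : ℝ≥0) (m : ℝ) :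
    Measurable (gaussianShiftDensity v m) := by
  unfold gaussianShiftDensity; fun_prop

theorem gaussianShiftDensity_sq (v : ℝ≥0) (m x : ℝ) :
    gaussianShiftDensity v m x ^ 2
      = Real.exp (m ^ 2 / v) * gaussianShiftDensity v (2 * m) x := by
  simp only [gaussianShiftDensity, ← Real.exp_nat_mul, ← Real.exp_add]
  ring_nf

section

variable {v : ℝ≥0}

theorem gaussianReal_eq_withDensity_gaussianShiftDensity (hv : v ≠ 0) (m : ℝ) :
    gaussianReal m v
      = (gaussianReal 0 v).withDensity fun x => ENNReal.ofReal (gaussianShiftDensity v m x) := by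
  have hpdf : gaussianPDF 0 v * (fun x => ENNReal.ofReal (gaussianShiftDensity v m x))
      = gaussianPDF m v := by
    ext x
    rw [Pi.mul_apply, gaussianPDF, gaussianPDF,
      ← ENNReal.ofReal_mul (gaussianPDFReal_nonneg _ _ _), gaussianPDFReal, gaussianPDFReal,
      mul_assoc, gaussianShiftDensity, ← Real.exp_add]
    congr 3
    have : (v : ℝ) ≠ 0 := NNReal.coe_ne_zero.2 hv
    field_simp
    ring
  rw [gaussianReal_of_var_ne_zero _ hv, gaussianReal_of_var_ne_zero _ hv, ← withDensity_mul _
    (measurable_gaussianPDF _ _) (measurable_gaussianShiftDensity v m).ennreal_ofReal, hpdf]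

theorem lintegral_gaussianShiftDensity (hv : v ≠ 0) (m : ℝ) :
    ∫⁻ x, ENNReal.ofReal (gaussianShiftDensity v m x) ∂gaussianReal 0 v = 1 := by
  rw [← setLIntegral_univ, ← withDensity_apply _ .univ,
    ← gaussianReal_eq_withDensity_gaussianShiftDensity hv, measure_univ]

theorem integrable_gaussianShiftDensity (hv : v ≠ 0) (m : ℝ) :
    Integrable (gaussianShiftDensity v m) (gaussianReal 0 v) := by
  refine ⟨(measurable_gaussianShiftDensity v m).aestronglyMeasurable, ?_⟩
  rw [hasFiniteIntegral_iff_ofReal (ae_of_all _ fun x => (gaussianShiftDensity_pos v m x).le),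
    lintegral_gaussianShiftDensity hv]
  exact ENNReal.one_lt_top

theorem integral_gaussianShiftDensity (hv : v ≠ 0) (m : ℝ) :
    ∫ x, gaussianShiftDensity v m x ∂gaussianReal 0 v = 1 := by
  rw [integral_eq_lintegral_of_nonneg_ae
    (ae_of_all _ fun x => (gaussianShiftDensity_pos v m x).le)
    (integrable_gaussianShiftDensity hv m).1, lintegral_gaussianShiftDensity hv,
    ENNReal.toReal_one]

theorem memLp_two_gaussianShiftDensity (hv : v ≠ 0) (m : ℝ) :
    MemLp (gaussianShiftDensity v m) 2 (gaussianReal 0 v) := by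
  refine (memLp_two_iff_integrable_sq (integrable_gaussianShiftDensity hv m).1).2 ?_
  simpa only [gaussianShiftDensity_sq] using
    (integrable_gaussianShiftDensity hv (2 * m)).const_mul (Real.exp (m ^ 2 / v))

theorem integral_gaussianShiftDensity_sq (hv : v ≠ 0) (m : ℝ) :
    ∫ x, gaussianShiftDensity v m x ^ 2 ∂gaussianReal 0 v = Real.exp (m ^ 2 / v) := by
  simp only [gaussianShiftDensity_sq, integral_const_mul, integral_gaussianShiftDensity hv,
    mul_one]

end

theorem infinitePi_gaussianReal_map_add (m a : ℕ → ℝ) (v : ℕ → ℝ≥0) :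
    (Measure.infinitePi fun k => gaussianReal (m k) (v k)).map (· + a)
      = Measure.infinitePi fun k => gaussianReal (m k + a k) (v k) := by
  have h := Measure.infinitePi_map_pi (fun k => gaussianReal (m k) (v k))
    (f := fun k => (· + a k)) fun k => measurable_add_const (a k)
  simp only [gaussianReal_map_add_const] at h
  exact h

theorem infinitePi_gaussianReal_absolutelyContinuous_zero {m : ℕ → ℝ} {v : ℕ → ℝ≥0}
    (hv : ∀ k, v k ≠ 0) (hm : Summable fun k => m k ^ 2 / v k) :
    Measure.infinitePi (fun k => gaussianReal (m k) (v k))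
      ≪ Measure.infinitePi fun k => gaussianReal 0 (v k) := by
  rw [funext fun k => gaussianReal_eq_withDensity_gaussianShiftDensity (hv k) (m k)]
  refine infinitePi_withDensity_absolutelyContinuous
    (fun k x => (gaussianShiftDensity_pos _ _ x).le)
    (fun k => memLp_two_gaussianShiftDensity (hv k) (m k))
    (fun k => integral_gaussianShiftDensity (hv k) (m k))
    (L := Real.exp (∑' k, m k ^ 2 / v k)) ?_
  simp only [integral_gaussianShiftDensity_sq (hv _), ← Real.exp_sum]
  exact (Real.continuous_exp.tendsto _).comp hm.hasSum.tendsto_sum_nat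

theorem infinitePi_gaussianReal_absolutelyContinuous {m m' : ℕ → ℝ} {v : ℕ → ℝ≥0}
    (hv : ∀ k, v k ≠ 0) (hm : Summable fun k => (m k - m' k) ^ 2 / v k) :
    Measure.infinitePi (fun k => gaussianReal (m k) (v k))
      ≪ Measure.infinitePi fun k => gaussianReal (m' k) (v k) := by
  have h := (infinitePi_gaussianReal_absolutelyContinuous_zero hv hm).map
    (measurable_add_const m')
  simpa only [infinitePi_gaussianReal_map_add, sub_add_cancel, zero_add] using h

end ProbabilityTheory

theorem stmt14_general (q : ℕ → ℝ) (hq : ∀ k, 0 < q k)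
    (μ : Measure (ℕ → ℝ))
    (hμ : ∀ (s : Finset ℕ) (A : ℕ → Set ℝ), (∀ k ∈ s, MeasurableSet (A k)) →
      μ {z : ℕ → ℝ | ∀ k ∈ s, z k ∈ A k}
        = ∏ k ∈ s, gaussianReal 0 (Real.toNNReal (q k)⁻¹) (A k))
    (h : ℕ → ℝ) (hsum : Summable fun k => q k * h k ^ 2) :
    Measure.map (fun z : ℕ → ℝ => z + h) μ ≪ μ ∧
      μ ≪ Measure.map (fun z : ℕ → ℝ => z + h) μ := by
  have hv : ∀ k, Real.toNNReal (q k)⁻¹ ≠ 0 := fun k => by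
    simpa only [ne_eq, Real.toNNReal_eq_zero, not_le, inv_pos] using hq k
  have hμ_eq : μ = Measure.infinitePi fun k => gaussianReal 0 (Real.toNNReal (q k)⁻¹) :=
    Measure.eq_infinitePi _ fun s A hA => hμ s A fun k _ => hA k
  have hsum' : Summable fun k => h k ^ 2 / Real.toNNReal (q k)⁻¹ := hsum.congr fun k => by
    rw [Real.coe_toNNReal _ (inv_pos.2 (hq k)).le, div_inv_eq_mul, mul_comm]
  rw [hμ_eq, infinitePi_gaussianReal_map_add]
  simp only [zero_add]
  exact ⟨infinitePi_gaussianReal_absolutelyContinuous hv (by simpa using hsum'),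
    infinitePi_gaussianReal_absolutelyContinuous hv (by simpa using hsum')⟩

/-- Cameron–Martin-type theorem for the product Gaussian measure `μ = ⊗_k N(0, 1/q_k)` on
`ℝ^ℕ`: if `Σ_k q_k h_k² < ∞`, then the translate `μ_h = μ(· - h)` and `μ` are mutually
absolutely continuous. The product measure `μ` is characterized by its values on cylinder
sets. -/
theorem stmt14 (q : ℕ → ℝ) (hq : ∀ k, 0 < q k)
    (μ : Measure (ℕ → ℝ)) [IsProbabilityMeasure μ]
    (hμ : ∀ (s : Finset ℕ) (A : ℕ → Set ℝ), (∀ k ∈ s, MeasurableSet (A k)) →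
      μ {z : ℕ → ℝ | ∀ k ∈ s, z k ∈ A k}
        = ∏ k ∈ s, gaussianReal 0 (Real.toNNReal (q k)⁻¹) (A k))
    (h : ℕ → ℝ) (hsum : Summable fun k => q k * h k ^ 2) :
    Measure.map (fun z : ℕ → ℝ => z + h) μ ≪ μ ∧
      μ ≪ Measure.map (fun z : ℕ → ℝ => z + h) μ :=
  stmt14_general q hq μ hμ h hsum
end

section
/- Let h : ℕ → ℝ satisfy Σ_{k=0}^∞ q_k h_k² < ∞, and let μ_h denote the pushforward of μ under the translation z ↦ z + h of ℝ^ℕ (coordinatewise addition). Then the Radon–Nikodym derivative dμ_h/dμ satisfies ∫_{ℝ^ℕ} (dμ_h/dμ)² dμ = exp( Σ_{k=0}^∞ q_k h_k² ). -/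
open MeasureTheory ProbabilityTheory
open scoped NNReal ENNReal

/-!
Write `G_n(z) = ∏_{k<n} exp(q_k h_k z_k - q_k h_k² / 2)` for the density of the translate of `μ` in
the first `n` coordinates and `E_n = exp(∑_{k<n} q_k h_k²)`. A one-dimensional Gaussian computation
gives `∫ G_m G_n dμ = E_m` for `m ≤ n`, so `‖G_n - G_m‖² = E_n - E_m` in `L²(μ)`, and `G_n`
converges in `L²` to some `G ≥ 0`. On a cylinder set `C`, `∫_C G_n dμ = μ_h(C)` as soon as `n`
exceeds the coordinates of `C`, hence `μ_h = G • μ`, `dμ_h/dμ = G` and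
`∫ G² dμ = lim ‖G_n‖² = lim E_n = exp(∑ q_k h_k²)`.
-/

noncomputable def shiftDensity (a c x : ℝ) : ℝ := Real.exp (a * c * x - a * c ^ 2 / 2)

@[fun_prop]
lemma measurable_shiftDensity (a c : ℝ) : Measurable (shiftDensity a c) := by
  unfold shiftDensity; fun_prop

lemma shiftDensity_pos (a c x : ℝ) : 0 < shiftDensity a c x := Real.exp_pos _

lemma shiftDensity_mul (a c d x : ℝ) :
    shiftDensity a c x * shiftDensity a d x = Real.exp (a * c * d) * shiftDensity a (c + d) x := by
  simp only [shiftDensity, ← Real.exp_add]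
  ring_nf

lemma gaussianReal_eq_withDensity_shiftDensity {a : ℝ} (ha : 0 < a) (c : ℝ) :
    gaussianReal c (Real.toNNReal a⁻¹)
      = (gaussianReal 0 (Real.toNNReal a⁻¹)).withDensity
          fun x => ENNReal.ofReal (shiftDensity a c x) := by
  have hv : Real.toNNReal a⁻¹ ≠ 0 := by simpa using ha
  rw [gaussianReal_of_var_ne_zero _ hv, gaussianReal_of_var_ne_zero _ hv,
    ← withDensity_mul _ (measurable_gaussianPDF _ _) (by fun_prop)]
  congr 1
  ext x
  simp only [Pi.mul_apply, gaussianPDF, ← ENNReal.ofReal_mul (gaussianPDFReal_nonneg _ _ _)]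
  congr 1
  rw [gaussianPDFReal, gaussianPDFReal, shiftDensity, mul_assoc _ (Real.exp _), ← Real.exp_add,
    Real.coe_toNNReal _ (by positivity)]
  congr 2
  field_simp
  ring

lemma lintegral_indicator_mul_shiftDensity {a : ℝ} (ha : 0 < a) (c : ℝ) {B : Set ℝ}
    (hB : MeasurableSet B) :
    ∫⁻ x, B.indicator 1 x * ENNReal.ofReal (shiftDensity a c x) ∂gaussianReal 0 (Real.toNNReal a⁻¹)
      = gaussianReal c (Real.toNNReal a⁻¹) B := by
  rw [gaussianReal_eq_withDensity_shiftDensity ha c, withDensity_apply _ hB,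
    ← lintegral_indicator hB]
  congr 1 with x
  by_cases hx : x ∈ B <;> simp [hx]

lemma lintegral_shiftDensity_mul {a : ℝ} (ha : 0 < a) (c d : ℝ) :
    ∫⁻ x, ENNReal.ofReal (shiftDensity a c x * shiftDensity a d x)
        ∂gaussianReal 0 (Real.toNNReal a⁻¹)
      = ENNReal.ofReal (Real.exp (a * c * d)) := by
  have h := lintegral_indicator_mul_shiftDensity ha (c + d) MeasurableSet.univ
  simp only [Set.indicator_univ, Pi.one_apply, one_mul, measure_univ] at h
  simp_rw [shiftDensity_mul, ENNReal.ofReal_mul (Real.exp_nonneg _)]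
  rw [lintegral_const_mul _ (by fun_prop), h, mul_one]

lemma lintegral_prod_infinitePi {ι : Type*} {X : ι → Type*} [∀ i, MeasurableSpace (X i)]
    (ν : (i : ι) → Measure (X i)) [∀ i, IsProbabilityMeasure (ν i)] (s : Finset ι)
    {ψ : (i : ι) → X i → ℝ≥0∞} (hψ : ∀ i, Measurable (ψ i)) :
    ∫⁻ z, ∏ i ∈ s, ψ i (z i) ∂Measure.infinitePi ν = ∏ i ∈ s, ∫⁻ x, ψ i x ∂ν i := by
  rw [lintegral_prod_eq_prod_lintegral_of_indepFun s _ (iIndepFun_infinitePi hψ)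
    fun i => (hψ i).comp (measurable_pi_apply i)]
  exact Finset.prod_congr rfl fun i _ =>
    (measurePreserving_eval_infinitePi ν i).lintegral_comp (hψ i)

section GaussianProduct

variable {ι : Type*}

noncomputable def gaussianProduct (q : ι → ℝ) : Measure (ι → ℝ) :=
  Measure.infinitePi fun k => gaussianReal 0 (Real.toNNReal (q k)⁻¹)

instance (q : ι → ℝ) : IsProbabilityMeasure (gaussianProduct q) := by
  unfold gaussianProduct; infer_instance

lemma map_add_gaussianProduct (q h : ι → ℝ) :
    (gaussianProduct q).map (fun z => z + h)
      = Measure.infinitePi fun k => gaussianReal (h k) (Real.toNNReal (q k)⁻¹) := by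
  rw [gaussianProduct, show (fun z : ι → ℝ => z + h) = fun z k => z k + h k from rfl,
    Measure.infinitePi_map_pi _ fun k => measurable_add_const (h k)]
  simp_rw [gaussianReal_map_add_const, zero_add]

noncomputable def cylinderDensity (q h : ι → ℝ) (s : Finset ι) (z : ι → ℝ) : ℝ :=
  ∏ k ∈ s, shiftDensity (q k) (h k) (z k)

variable (q : ι → ℝ)

@[fun_prop]
lemma measurable_cylinderDensity (h : ι → ℝ) (s : Finset ι) :
    Measurable (cylinderDensity q h s) := by
  unfold cylinderDensity; fun_prop

lemma cylinderDensity_nonneg (h : ι → ℝ) (s : Finset ι) (z : ι → ℝ) :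
    0 ≤ cylinderDensity q h s z :=
  Finset.prod_nonneg fun _ _ => (shiftDensity_pos _ _ _).le

lemma cylinderDensity_eq_of_subset (h : ι → ℝ) {s t : Finset ι} (hst : s ⊆ t) :
    cylinderDensity q h s = cylinderDensity q ((s : Set ι).indicator h) t := by
  classical
  funext z
  refine Finset.prod_subset_one_on_sdiff hst (fun k hk => ?_) (fun k hk => ?_)
  · simp [shiftDensity, (Finset.mem_sdiff.mp hk).2]
  · simp [hk]

variable {q}

lemma lintegral_cylinderDensity_mul (hq : ∀ k, 0 < q k) (c d : ι → ℝ) (s : Finset ι) :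
    ∫⁻ z, ENNReal.ofReal (cylinderDensity q c s z * cylinderDensity q d s z) ∂gaussianProduct q
      = ENNReal.ofReal (Real.exp (∑ k ∈ s, q k * c k * d k)) := by
  simp_rw [cylinderDensity, ← Finset.prod_mul_distrib, ENNReal.ofReal_prod_of_nonneg fun k _ =>
    mul_nonneg (shiftDensity_pos _ _ _).le (shiftDensity_pos _ _ _).le]
  rw [gaussianProduct, lintegral_prod_infinitePi _ _
      (ψ := fun k x => ENNReal.ofReal (shiftDensity (q k) (c k) x * shiftDensity (q k) (d k) x))
      fun k => by fun_prop, Real.exp_sum,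
    ENNReal.ofReal_prod_of_nonneg fun k _ => (Real.exp_pos _).le]
  exact Finset.prod_congr rfl fun k _ => lintegral_shiftDensity_mul (hq k) _ _

lemma setLIntegral_cylinderDensity (hq : ∀ k, 0 < q k) (h : ι → ℝ) {u s : Finset ι}
    (hus : u ⊆ s) {B : ι → Set ℝ} (hB : ∀ k, MeasurableSet (B k)) :
    ∫⁻ z in (u : Set ι).pi B, ENNReal.ofReal (cylinderDensity q h s z) ∂gaussianProduct q
      = ∏ k ∈ u, gaussianReal (h k) (Real.toNNReal (q k)⁻¹) (B k) := by
  classical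
  set B' : ι → Set ℝ := fun k => if k ∈ u then B k else Set.univ
  have hB' : ∀ k, MeasurableSet (B' k) := fun k => by
    by_cases hk : k ∈ u <;> simp [B', hk, hB k]
  have hpi : (u : Set ι).pi B = (s : Set ι).pi B' := by
    ext z
    simp only [Set.mem_pi, Finset.mem_coe, B']
    refine ⟨fun hz k _ => ?_, fun hz k hk => by simpa [hk] using hz k (hus hk)⟩
    split_ifs with hk
    exacts [hz k hk, Set.mem_univ _]
  have hintegrand : ∀ z, ((s : Set ι).pi B').indicator
      (fun z => ENNReal.ofReal (cylinderDensity q h s z)) z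
      = ∏ k ∈ s, (B' k).indicator 1 (z k) * ENNReal.ofReal (shiftDensity (q k) (h k) (z k)) := by
    intro z
    have hindicator : ∀ (S : Set (ι → ℝ)) (F : (ι → ℝ) → ℝ≥0∞), S.indicator F z = S.indicator 1 z * F z :=
      fun S F => by by_cases hz : z ∈ S <;> simp [hz]
    rw [hindicator, Set.indicator_pi_one_apply, cylinderDensity,
      ENNReal.ofReal_prod_of_nonneg fun k _ => (shiftDensity_pos _ _ _).le,
      Finset.prod_mul_distrib]
  rw [hpi, ← lintegral_indicator (MeasurableSet.pi s.countable_toSet fun k _ => hB' k),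
    lintegral_congr hintegrand, gaussianProduct, lintegral_prod_infinitePi _ _
      (ψ := fun k x => (B' k).indicator 1 x * ENNReal.ofReal (shiftDensity (q k) (h k) x))
      fun k => (measurable_one.indicator (hB' k)).mul (by fun_prop)]
  simp_rw [lintegral_indicator_mul_shiftDensity (hq _) _ (hB' _)]
  refine (Finset.prod_subset hus fun k _ hk => by simp [B', hk]).symm.trans ?_
  exact Finset.prod_congr rfl fun k hk => by simp [B', hk]

end GaussianProduct

section L2

open Filter Topology

lemma exists_tendsto_of_inner_eq {E : Type*} [NormedAddCommGroup E] [InnerProductSpace ℝ E]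
    [CompleteSpace E] {x : ℕ → E} {e : ℕ → ℝ} {a : ℝ}
    (hx : ∀ m n, m ≤ n → inner ℝ (x m) (x n) = e m) (he : Tendsto e atTop (𝓝 a)) :
    ∃ L, Tendsto x atTop (𝓝 L) ∧ ‖L‖ ^ 2 = a := by
  have hnorm : ∀ n, ‖x n‖ ^ 2 = e n := fun n => by
    rw [← real_inner_self_eq_norm_sq, hx n n le_rfl]
  have hdist : ∀ m n, m ≤ n → dist (x n) (x m) ^ 2 = e n - e m := fun m n hmn => by
    rw [dist_eq_norm, norm_sub_sq_real, hnorm, hnorm, real_inner_comm, hx m n hmn]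
    ring
  have hcauchy : CauchySeq x := Metric.cauchySeq_iff'.2 fun ε hε => by
    obtain ⟨N, hN⟩ := Metric.cauchySeq_iff'.1 he.cauchySeq (ε ^ 2) (by positivity)
    refine ⟨N, fun n hn => (pow_lt_pow_iff_left₀ dist_nonneg hε.le two_ne_zero).1 ?_⟩
    rw [hdist N n hn]
    exact (le_abs_self _).trans_lt (hN n hn)
  obtain ⟨L, hL⟩ := cauchySeq_tendsto_of_complete hcauchy
  refine ⟨L, hL, tendsto_nhds_unique (hL.norm.pow 2) ?_⟩
  simpa only [hnorm] using he

variable {α : Type*} [MeasurableSpace α] {μ : Measure α}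

lemma tendsto_setIntegral_of_tendsto_L2 {ι : Type*} {l : Filter ι} {F : ι → Lp ℝ 2 μ}
    {L : Lp ℝ 2 μ} (hF : Tendsto F l (𝓝 L)) {S : Set α} (hS : MeasurableSet S) (hμS : μ S ≠ ∞) :
    Tendsto (fun i => ∫ x in S, F i x ∂μ) l (𝓝 (∫ x in S, L x ∂μ)) := by
  simp_rw [← L2.inner_indicatorConstLp_one hS hμS]
  exact tendsto_const_nhds.inner hF

lemma lintegral_ofReal_sq_eq_norm_sq {f : Lp ℝ 2 μ} (hf : 0 ≤ᵐ[μ] f) :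
    ∫⁻ x, ENNReal.ofReal (f x) ^ 2 ∂μ = ENNReal.ofReal (‖f‖ ^ 2) := by
  rw [← real_inner_self_eq_norm_sq, L2.inner_def, ofReal_integral_eq_lintegral_ofReal]
  · refine lintegral_congr_ae (hf.mono fun x hx => ?_)
    simp [← ENNReal.ofReal_pow hx]
  · simpa using L2.integrable_inner (𝕜 := ℝ) f f
  · exact ae_of_all _ fun x => by simpa using sq_nonneg (f x)

end L2

section CameronMartin

variable {ι : Type*} {q : ι → ℝ}

lemma integrable_cylinderDensity_mul (hq : ∀ k, 0 < q k) (c d : ι → ℝ) (s : Finset ι) :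
    Integrable (fun z => cylinderDensity q c s z * cylinderDensity q d s z) (gaussianProduct q) :=
  ⟨by fun_prop, (hasFiniteIntegral_iff_ofReal (ae_of_all _ fun z => mul_nonneg
    (cylinderDensity_nonneg q c s z) (cylinderDensity_nonneg q d s z))).2
    (by rw [lintegral_cylinderDensity_mul hq]; exact ENNReal.ofReal_lt_top)⟩

lemma integral_cylinderDensity_mul (hq : ∀ k, 0 < q k) (c d : ι → ℝ) (s : Finset ι) :
    ∫ z, cylinderDensity q c s z * cylinderDensity q d s z ∂gaussianProduct q
      = Real.exp (∑ k ∈ s, q k * c k * d k) := by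
  rw [integral_eq_lintegral_of_nonneg_ae (ae_of_all _ fun z => mul_nonneg
    (cylinderDensity_nonneg q c s z) (cylinderDensity_nonneg q d s z)) (by fun_prop),
    lintegral_cylinderDensity_mul hq, ENNReal.toReal_ofReal (Real.exp_pos _).le]

lemma memLp_cylinderDensity (hq : ∀ k, 0 < q k) (h : ι → ℝ) (s : Finset ι) :
    MemLp (cylinderDensity q h s) 2 (gaussianProduct q) :=
  (memLp_two_iff_integrable_sq (by fun_prop)).2 <| by
    simpa only [sq] using integrable_cylinderDensity_mul hq h h s

noncomputable def cylinderDensityLp (hq : ∀ k, 0 < q k) (h : ι → ℝ) (s : Finset ι) :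
    Lp ℝ 2 (gaussianProduct q) :=
  (memLp_cylinderDensity hq h s).toLp

lemma cylinderDensityLp_ae_eq (hq : ∀ k, 0 < q k) (h : ι → ℝ) (s : Finset ι) :
    cylinderDensityLp hq h s =ᵐ[gaussianProduct q] cylinderDensity q h s :=
  (memLp_cylinderDensity hq h s).coeFn_toLp

end CameronMartin

section RangeLimit

open Filter Topology

variable {q : ℕ → ℝ}

lemma inner_cylinderDensityLp_range (hq : ∀ k, 0 < q k) (h : ℕ → ℝ) {m n : ℕ} (hmn : m ≤ n) :
    inner ℝ (cylinderDensityLp hq h (Finset.range m)) (cylinderDensityLp hq h (Finset.range n))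
      = Real.exp (∑ k ∈ Finset.range m, q k * h k ^ 2) := by
  have hsub := Finset.range_subset_range.2 hmn
  rw [L2.inner_def, integral_congr_ae (g := fun z =>
      cylinderDensity q h (Finset.range n) z * cylinderDensity q h (Finset.range m) z),
    cylinderDensity_eq_of_subset q h hsub, integral_cylinderDensity_mul hq]
  swap
  · filter_upwards [cylinderDensityLp_ae_eq hq h (Finset.range m),
      cylinderDensityLp_ae_eq hq h (Finset.range n)] with z hm hn
    simp [hm, hn]
  congr 1
  refine (Finset.sum_subset hsub fun k _ hk => ?_).symm.trans (Finset.sum_congr rfl fun k hk => ?_)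
  · rw [Set.indicator_of_notMem (Finset.mem_coe.not.2 hk), mul_zero]
  · rw [Set.indicator_of_mem (Finset.mem_coe.2 hk), mul_assoc, sq]

lemma withDensity_eq_infinitePi_of_tendsto (hq : ∀ k, 0 < q k) (h : ℕ → ℝ)
    {L : Lp ℝ 2 (gaussianProduct q)} (hL0 : 0 ≤ᵐ[gaussianProduct q] L)
    (hL : Tendsto (fun n => cylinderDensityLp hq h (Finset.range n)) atTop (𝓝 L)) :
    (gaussianProduct q).withDensity (fun z => ENNReal.ofReal (L z))
      = Measure.infinitePi fun k => gaussianReal (h k) (Real.toNNReal (q k)⁻¹) := by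
  refine Measure.eq_infinitePi _ fun u B hB => ?_
  have hS : MeasurableSet ((u : Set ℕ).pi B) :=
    MeasurableSet.pi u.countable_toSet fun k _ => hB k
  have hlim := tendsto_setIntegral_of_tendsto_L2 hL hS (measure_ne_top _ _)
  have hconst : ∀ᶠ n in atTop, ∫ z in (u : Set ℕ).pi B,
      cylinderDensityLp hq h (Finset.range n) z ∂gaussianProduct q
      = (∏ k ∈ u, gaussianReal (h k) (Real.toNNReal (q k)⁻¹) (B k)).toReal := by
    filter_upwards [eventually_ge_atTop (u.sup id).succ] with n hn
    rw [setIntegral_congr_ae hS ((cylinderDensityLp_ae_eq hq h _).mono fun z hz _ => hz),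
      integral_eq_lintegral_of_nonneg_ae
        (ae_of_all _ fun z => cylinderDensity_nonneg q h _ z) (by fun_prop),
      setLIntegral_cylinderDensity hq h
        ((Finset.subset_range_sup_succ u).trans (Finset.range_subset_range.2 hn)) hB]
  rw [withDensity_apply _ hS, ← ofReal_integral_eq_lintegral_ofReal
      (Lp.memLp L |>.integrable one_le_two).integrableOn (ae_restrict_of_ae hL0),
    tendsto_nhds_unique hlim (tendsto_nhds_of_eventually_eq hconst)]
  exact ENNReal.ofReal_toReal (ENNReal.prod_ne_top fun k _ => measure_ne_top _ _)

end RangeLimit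

theorem stmt15_general (q : ℕ → ℝ) (hq : ∀ k, 0 < q k)
    (μ : Measure (ℕ → ℝ))
    (hμ : ∀ (s : Finset ℕ) (A : ℕ → Set ℝ), (∀ k ∈ s, MeasurableSet (A k)) →
      μ {z : ℕ → ℝ | ∀ k ∈ s, z k ∈ A k}
        = ∏ k ∈ s, gaussianReal 0 (Real.toNNReal (q k)⁻¹) (A k))
    (h : ℕ → ℝ) (hsum : Summable fun k => q k * h k ^ 2) :
    ∫⁻ z, (Measure.rnDeriv (Measure.map (fun z : ℕ → ℝ => z + h) μ) μ z) ^ 2 ∂μ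
      = ENNReal.ofReal (Real.exp (∑' k, q k * h k ^ 2)) := by
  obtain rfl : μ = gaussianProduct q :=
    Measure.eq_infinitePi _ fun s A hA => hμ s A fun k _ => hA k
  obtain ⟨L, hL, hLnorm⟩ := exists_tendsto_of_inner_eq
    (fun m n hmn => inner_cylinderDensityLp_range hq h hmn)
    ((Real.continuous_exp.tendsto _).comp hsum.hasSum.tendsto_sum_nat)
  have hL0 : 0 ≤ᵐ[gaussianProduct q] L := (Lp.coeFn_nonneg L).2 <|
    ge_of_tendsto' hL fun n => (Lp.coeFn_nonneg _).1 <|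
      (cylinderDensityLp_ae_eq hq h _).mono fun z hz => hz ▸ cylinderDensity_nonneg q h _ z
  have hmap : (gaussianProduct q).map (fun z => z + h)
      = (gaussianProduct q).withDensity (fun z => ENNReal.ofReal (L z)) := by
    rw [withDensity_eq_infinitePi_of_tendsto hq h hL0 hL, map_add_gaussianProduct]
  rw [← hLnorm, ← lintegral_ofReal_sq_eq_norm_sq hL0, hmap]
  refine lintegral_congr_ae ?_
  filter_upwards [Measure.rnDeriv_withDensity (gaussianProduct q)
    (by fun_prop : Measurable fun z => ENNReal.ofReal (L z))] with z hz
  rw [hz]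

/-- For the product Gaussian measure `μ = ⊗_k N(0, 1/q_k)` on `ℝ^ℕ` (characterized by its
values on cylinder sets) and `h` with `Σ_k q_k h_k² < ∞`, the Radon–Nikodym derivative of
the translate `μ_h = μ(· - h)` with respect to `μ` satisfies
`∫ (dμ_h/dμ)² dμ = exp(Σ_k q_k h_k²)`. -/
theorem stmt15 (q : ℕ → ℝ) (hq : ∀ k, 0 < q k)
    (μ : Measure (ℕ → ℝ)) [IsProbabilityMeasure μ]
    (hμ : ∀ (s : Finset ℕ) (A : ℕ → Set ℝ), (∀ k ∈ s, MeasurableSet (A k)) →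
      μ {z : ℕ → ℝ | ∀ k ∈ s, z k ∈ A k}
        = ∏ k ∈ s, gaussianReal 0 (Real.toNNReal (q k)⁻¹) (A k))
    (h : ℕ → ℝ) (hsum : Summable fun k => q k * h k ^ 2) :
    ∫⁻ z, (Measure.rnDeriv (Measure.map (fun z : ℕ → ℝ => z + h) μ) μ z) ^ 2 ∂μ
      = ENNReal.ofReal (Real.exp (∑' k, q k * h k ^ 2)) :=
  stmt15_general q hq μ hμ h hsum
end
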